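/- arXiv:1906.05504 — 9 statements merged into one kernel-verified Lean document; each statement's English description precedes it below -/
import Mathlib

section
/- If G is a finite triangle-free simple graph and G is not isomorphic to K_2 (the complete graph on two vertices), then the cochromatic number of G equals the chromatic number of G, i.e. Z(G) = χ(G). -/
open Finset

/-- A finset is an independent set in `G`. -/
def IsIndepF {V : Type*} (G : SimpleGraph V) (s : Finset V) : Prop :=
  ∀ u ∈ s, ∀ v ∈ s, ¬ G.Adj u v

/-- A finset is a clique in `G`. -/
def IsCliqueF {V : Type*} (G : SimpleGraph V) (s : Finset V) : Prop :=
  ∀ u ∈ s, ∀ v ∈ s, u ≠ v → G.Adj u v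

/-- The chromatic number: fewest colors in a proper coloring. -/
noncomputable def chrom {V : Type*} [Fintype V] (G : SimpleGraph V) : ℕ :=
  sInf {n : ℕ | ∃ c : V → Fin n, ∀ u v, G.Adj u v → c u ≠ c v}

/-- The cochromatic number: fewest parts in a partition of the vertices into
cliques and independent sets. -/
noncomputable def cochrom {V : Type*} [Fintype V] [DecidableEq V] (G : SimpleGraph V) : ℕ :=
  sInf {n : ℕ | ∃ c : V → Fin n, ∀ i : Fin n,
    IsCliqueF G (Finset.univ.filter fun v => c v = i) ∨
    IsIndepF G (Finset.univ.filter fun v => c v = i)}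

section Helpers
variable {V : Type*} [DecidableEq V] {G : SimpleGraph V}

omit [DecidableEq V] in
lemma indep_subset {s t : Finset V} (h : s ⊆ t) (ht : IsIndepF G t) : IsIndepF G s :=
  fun u hu v hv => ht u (h hu) v (h hv)

omit [DecidableEq V] in
lemma clique_subset {s t : Finset V} (h : s ⊆ t) (ht : IsCliqueF G t) : IsCliqueF G s :=
  fun u hu v hv => ht u (h hu) v (h hv)

lemma noTri (htf : ∀ s : Finset V, IsCliqueF G s → s.card ≤ 2)
    {a b c : V} (hab : G.Adj a b) (hac : G.Adj a c) (hbc : G.Adj b c) : False := by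
  have hclique : IsCliqueF G {a, b, c} := by
    intro x hx y hy hxy
    simp only [Finset.mem_insert, Finset.mem_singleton] at hx hy
    rcases hx with rfl | rfl | rfl <;> rcases hy with rfl | rfl | rfl <;>
      first
        | exact absurd rfl hxy
        | exact hab | exact hac | exact hbc
        | exact hab.symm | exact hac.symm | exact hbc.symm
  have hcard : ({a, b, c} : Finset V).card = 3 := by
    rw [Finset.card_insert_of_notMem, Finset.card_insert_of_notMem, Finset.card_singleton]
    · simp [hbc.ne]
    · simp [hab.ne, hac.ne]
  have := htf _ hclique
  omega

lemma clique_not_indep_eq (htf : ∀ s : Finset V, IsCliqueF G s → s.card ≤ 2)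
    {s : Finset V} (hc : IsCliqueF G s) (hi : ¬ IsIndepF G s) :
    ∃ u v, G.Adj u v ∧ s = {u, v} := by
  simp only [IsIndepF] at hi
  push_neg at hi
  obtain ⟨u, hu, v, hv, huv⟩ := hi
  refine ⟨u, v, huv, ?_⟩
  have hsub : ({u, v} : Finset V) ⊆ s := by
    intro x hx; simp only [Finset.mem_insert, Finset.mem_singleton] at hx
    rcases hx with rfl | rfl <;> assumption
  have hcard : ({u, v} : Finset V).card = 2 := Finset.card_pair huv.ne
  exact (Finset.eq_of_subset_of_card_le hsub (by rw [hcard]; exact htf s hc)).symm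

lemma mainLemma (htf : ∀ s : Finset V, IsCliqueF G s → s.card ≤ 2) :
    ∀ N (s : Finset V), s.card ≤ N → ∀ (n : ℕ) (c : V → ℕ),
      (∀ i : ℕ, IsCliqueF G (s.filter fun v => c v = i) ∨
        IsIndepF G (s.filter fun v => c v = i)) →
      (∀ w ∈ s, c w < n) →
      ∃ d : V → ℕ, (∀ w, d w < max n 2) ∧ ∀ x ∈ s, ∀ y ∈ s, G.Adj x y → d x ≠ d y := by
  classical
  intro N
  induction N with
  | zero =>
    intro s hs n c _ _
    have hse : s = ∅ := Finset.card_eq_zero.mp (Nat.le_zero.mp hs)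
    subst hse
    exact ⟨fun _ => 0, fun w => lt_of_lt_of_le (by norm_num) (le_max_right n 2),
      fun x hx => by simp at hx⟩
  | succ N ih =>
    intro s hs n c hparts hc
    by_cases hall : ∀ i : ℕ, IsIndepF G (s.filter fun v => c v = i)
    · refine ⟨fun w => if w ∈ s then c w else 0, ?_, ?_⟩
      · intro w; dsimp only; split_ifs with h
        · exact lt_of_lt_of_le (hc w h) (le_max_left n 2)
        · exact lt_of_lt_of_le (by norm_num) (le_max_right n 2)
      · intro x hx y hy hxy h
        dsimp only at h
        rw [if_pos hx, if_pos hy] at h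
        exact hall (c x) x (Finset.mem_filter.mpr ⟨hx, rfl⟩) y
          (Finset.mem_filter.mpr ⟨hy, h.symm⟩) hxy
    · push_neg at hall
      obtain ⟨i, hi⟩ := hall
      have hclq := (hparts i).resolve_right hi
      obtain ⟨u, v, huv, hpart⟩ := clique_not_indep_eq htf hclq hi
      have hum : u ∈ s.filter fun v => c v = i := by rw [hpart]; simp
      have hvm : v ∈ s.filter fun w => c w = i := by rw [hpart]; simp
      have hu : u ∈ s := (Finset.mem_filter.mp hum).1
      have hcu : c u = i := (Finset.mem_filter.mp hum).2
      have hv : v ∈ s := (Finset.mem_filter.mp hvm).1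
      have hcv : c v = i := (Finset.mem_filter.mp hvm).2
      have hilt : i < n := hcu ▸ hc u hu
      rcases lt_or_ge n 3 with hn | hn
      · -- n ≤ 2
        have hn12 : n = 1 ∨ n = 2 := by omega
        rcases hn12 with rfl | rfl
        · -- n = 1
          have hi0 : i = 0 := by omega
          have hseq : s = {u, v} := by
            rw [← hpart]
            symm
            apply Finset.filter_eq_self.mpr
            intro w hw
            have := hc w hw; omega
          refine ⟨fun w => if w = u then 0 else 1, ?_, ?_⟩
          · intro w; dsimp only; split_ifs <;> simp
          · intro x hx y hy hxy
            dsimp only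
            rw [hseq] at hx hy
            simp only [Finset.mem_insert, Finset.mem_singleton] at hx hy
            rcases hx with rfl | rfl <;> rcases hy with rfl | rfl <;>
              first
                | exact (G.irrefl hxy).elim
                | simp [huv.ne']
        · -- n = 2
          have hj : ∃ j, j < 2 ∧ j ≠ i := ⟨1 - i, by omega, by omega⟩
          obtain ⟨j, hj2, hji⟩ := hj
          set p := s.filter fun w => c w = j with hpdef
          have tri : ∀ w ∈ s, w = u ∨ w = v ∨ (w ∈ p ∧ w ≠ u ∧ w ≠ v) := by
            intro w hw
            by_cases hci : c w = i
            · have : w ∈ s.filter fun v => c v = i := Finset.mem_filter.mpr ⟨hw, hci⟩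
              rw [hpart] at this
              simp only [Finset.mem_insert, Finset.mem_singleton] at this
              tauto
            · have hcw := hc w hw
              have hcj : c w = j := by omega
              have hwp : w ∈ p := Finset.mem_filter.mpr ⟨hw, hcj⟩
              have hwu : w ≠ u := fun h => hci (h ▸ hcu)
              have hwv : w ≠ v := fun h => hci (h ▸ hcv)
              tauto
          by_cases hp : IsIndepF G p
          · refine ⟨fun w => if w = u then 0 else if w = v then 1 else
              if G.Adj u w then 1 else 0, ?_, ?_⟩
            · intro w; dsimp only; split_ifs <;> simp
            · intro x hx y hy hxy
              dsimp only
              rcases tri x hx with rfl | rfl | ⟨hxp, hxu, hxv⟩ <;>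
                rcases tri y hy with rfl | rfl | ⟨hyp, hyu, hyv⟩
              · exact (G.irrefl hxy).elim
              · simp [huv.ne']
              · simp [hyu, hyv, hxy]
              · simp [huv.ne']
              · exact (G.irrefl hxy).elim
              · have hnuy : ¬ G.Adj u y := fun h => noTri htf huv h hxy
                simp [huv.ne', hyu, hyv, hnuy]
              · simp [hxu, hxv, hxy.symm]
              · have hnux : ¬ G.Adj u x := fun h => noTri htf huv h hxy.symm
                simp [hxu, hxv, hnux, huv.ne']
              · exact (hp x hxp y hyp hxy).elim
          · have hclqp := (hparts j).resolve_right hp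
            obtain ⟨a, b, hab, hpeq⟩ := clique_not_indep_eq htf hclqp hp
            have ham : a ∈ p := by rw [hpdef, hpeq]; simp
            have hbm : b ∈ p := by rw [hpdef, hpeq]; simp
            have hca : c a = j := (Finset.mem_filter.mp ham).2
            have hcb : c b = j := (Finset.mem_filter.mp hbm).2
            have hau : a ≠ u := fun h => hji (by rw [h] at hca; omega)
            have hav : a ≠ v := fun h => hji (by rw [h] at hca; omega)
            have hbu : b ≠ u := fun h => hji (by rw [h] at hcb; omega)
            have hbv : b ≠ v := fun h => hji (by rw [h] at hcb; omega)
            have tri4 : ∀ w ∈ s, w = u ∨ w = v ∨ w = a ∨ w = b := by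
              intro w hw
              rcases tri w hw with rfl | rfl | ⟨hwp, _, _⟩
              · tauto
              · tauto
              · rw [hpdef] at hwp
                rw [hpeq] at hwp
                simp only [Finset.mem_insert, Finset.mem_singleton] at hwp
                tauto
            set cond := G.Adj a u ∨ G.Adj b v with hconddef
            refine ⟨fun w => if w = u then 0 else if w = v then 1 else
              if w = a then (if cond then 1 else 0) else (if cond then 0 else 1), ?_, ?_⟩
            · intro w; dsimp only; split_ifs <;> simp
            · intro x hx y hy hxy
              dsimp only
              rcases tri4 x hx with rfl | rfl | rfl | rfl <;>
                rcases tri4 y hy with rfl | rfl | rfl | rfl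
              · exact (G.irrefl hxy).elim
              · simp [huv.ne']
              · -- u, a : Adj u a
                have hcond : cond := Or.inl hxy.symm
                simp [hau, hav, hcond]
              · -- u, b : Adj u b → cond false
                have hcond : ¬ cond := by
                  rintro (h | h)
                  · exact noTri htf h.symm hxy hab
                  · exact noTri htf huv hxy h.symm
                simp [hbu, hbv, hab.ne', hcond]
              · simp [huv.ne']
              · exact (G.irrefl hxy).elim
              · -- v, a : Adj v a → cond false
                have hcond : ¬ cond := by
                  rintro (h | h)
                  · exact noTri htf huv h.symm hxy
                  · exact noTri htf hxy h.symm hab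
                simp [hau, hav, huv.ne', hcond]
              · -- v, b : Adj v b → cond true
                have hcond : cond := Or.inr hxy.symm
                simp [hbu, hbv, hab.ne', huv.ne', hcond]
              · -- a, u
                have hcond : cond := Or.inl hxy
                simp [hau, hav, hcond]
              · -- a, v
                have hcond : ¬ cond := by
                  rintro (h | h)
                  · exact noTri htf huv h.symm hxy.symm
                  · exact noTri htf hxy.symm h.symm hab
                simp [hau, hav, huv.ne', hcond]
              · exact (G.irrefl hxy).elim
              · -- a, b
                by_cases hcond : cond <;> simp [hau, hav, hbu, hbv, hab.ne, hab.ne', hcond]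
              · -- b, u
                have hcond : ¬ cond := by
                  rintro (h | h)
                  · exact noTri htf h.symm hxy.symm hab
                  · exact noTri htf huv hxy.symm h.symm
                simp [hbu, hbv, hab.ne', hcond]
              · -- b, v
                have hcond : cond := Or.inr hxy
                simp [hbu, hbv, hab.ne', huv.ne', hcond]
              · -- b, a
                by_cases hcond : cond <;> simp [hau, hav, hbu, hbv, hab.ne, hab.ne', hcond]
              · exact (G.irrefl hxy).elim
      · -- n ≥ 3
        set s' := (s.erase u).erase v with hs'def
        have hs'sub : s' ⊆ s := fun w hw =>
          Finset.mem_of_mem_erase (Finset.mem_of_mem_erase hw)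
        have hmem' : ∀ w, w ∈ s' ↔ w ∈ s ∧ w ≠ u ∧ w ≠ v := by
          intro w
          simp only [hs'def, Finset.mem_erase]
          tauto
        have hve : v ∈ s.erase u := Finset.mem_erase.mpr ⟨huv.ne', hv⟩
        have hcard' : s'.card ≤ N := by
          have h1 : (s.erase u).card = s.card - 1 := Finset.card_erase_of_mem hu
          have h2 : s'.card = (s.erase u).card - 1 := Finset.card_erase_of_mem hve
          have h3 : 1 ≤ s.card := Finset.card_pos.mpr ⟨u, hu⟩
          omega
        have hne : ∀ w ∈ s', c w ≠ i := by
          intro w hw hci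
          have hws := (hmem' w).mp hw
          have : w ∈ s.filter fun v => c v = i := Finset.mem_filter.mpr ⟨hws.1, hci⟩
          rw [hpart] at this
          simp only [Finset.mem_insert, Finset.mem_singleton] at this
          tauto
        set c' : V → ℕ := fun w => if c w < i then c w else c w - 1 with hc'def
        have hbound' : ∀ w ∈ s', c' w < n - 1 := by
          intro w hw
          have h1 := hc w (hs'sub hw)
          have h2 := hne w hw
          simp only [hc'def]
          split_ifs <;> omega
        have hparts' : ∀ j : ℕ, IsCliqueF G (s'.filter fun v => c' v = j) ∨
            IsIndepF G (s'.filter fun v => c' v = j) := by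
          intro j
          have hfe : (s'.filter fun w => c' w = j) =
              s'.filter fun w => c w = (if j < i then j else j + 1) := by
            ext w
            simp only [Finset.mem_filter, and_congr_right_iff]
            intro hw
            have h2 := hne w hw
            simp only [hc'def]
            constructor <;> intro h <;> split_ifs at h ⊢ <;> omega
          rw [hfe]
          have hsub2 : (s'.filter fun w => c w = (if j < i then j else j + 1)) ⊆
              s.filter fun w => c w = (if j < i then j else j + 1) :=
            Finset.filter_subset_filter _ hs'sub
          rcases hparts (if j < i then j else j + 1) with h | h
          · exact Or.inl (clique_subset hsub2 h)
          · exact Or.inr (indep_subset hsub2 h)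
        obtain ⟨d', hd'b, hd'p⟩ := ih s' hcard' (n - 1) c' hparts' hbound'
        have hmax1 : max (n - 1) 2 = n - 1 := max_eq_left (by omega)
        rw [hmax1] at hd'b
        have hmax2 : max n 2 = n := max_eq_left (by omega)
        refine ⟨fun w => if w = u ∨ (w ∈ s' ∧ G.Adj v w) then n - 1 else
          if w = v then 0 else d' w, ?_, ?_⟩
        · intro w
          dsimp only
          rw [hmax2]
          have := hd'b w
          split_ifs <;> omega
        · intro x hx y hy hxy
          dsimp only
          by_cases Px : x = u ∨ (x ∈ s' ∧ G.Adj v x) <;>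
            by_cases Py : y = u ∨ (y ∈ s' ∧ G.Adj v y)
          · exfalso
            rcases Px with rfl | ⟨hxs', hvx⟩ <;> rcases Py with rfl | ⟨hys', hvy⟩
            · exact G.irrefl hxy
            · exact noTri htf huv hxy hvy
            · exact noTri htf huv hxy.symm hvx
            · exact noTri htf hvx hvy hxy
          · rw [if_pos Px, if_neg Py]
            have := hd'b y
            split_ifs <;> omega
          · rw [if_neg Px, if_pos Py]
            have := hd'b x
            split_ifs <;> omega
          · rw [if_neg Px, if_neg Py]
            push_neg at Px Py
            split_ifs with h1 h2 h2
            · subst h1; subst h2; exact (G.irrefl hxy).elim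
            · subst h1
              exfalso
              have hys' : y ∈ s' := (hmem' y).mpr ⟨hy, Py.1, h2⟩
              exact Py.2 hys' hxy
            · subst h2
              exfalso
              have hxs' : x ∈ s' := (hmem' x).mpr ⟨hx, Px.1, h1⟩
              exact Px.2 hxs' hxy.symm
            · exact hd'p x ((hmem' x).mpr ⟨hx, Px.1, h1⟩) y ((hmem' y).mpr ⟨hy, Py.1, h2⟩) hxy

end Helpers

/-- If `G` is a finite triangle-free simple graph not isomorphic to `K₂`,
then `Z(G) = χ(G)`. -/
theorem cochrom_eq_chrom_of_triangleFree {V : Type*} [Fintype V] [DecidableEq V]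
    (G : SimpleGraph V)
    (htf : ∀ s : Finset V, IsCliqueF G s → s.card ≤ 2)
    (hK2 : ¬ Nonempty (G ≃g SimpleGraph.completeGraph (Fin 2))) :
    cochrom G = chrom G := by
  classical
  have hBne : {n : ℕ | ∃ c : V → Fin n, ∀ u v, G.Adj u v → c u ≠ c v}.Nonempty := by
    refine ⟨Fintype.card V, fun v => Fintype.equivFin V v, ?_⟩
    intro u v hadj h
    exact hadj.ne ((Fintype.equivFin V).injective h)
  have hsub : {n : ℕ | ∃ c : V → Fin n, ∀ u v, G.Adj u v → c u ≠ c v} ⊆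
      {n : ℕ | ∃ c : V → Fin n, ∀ i : Fin n,
        IsCliqueF G (Finset.univ.filter fun v => c v = i) ∨
        IsIndepF G (Finset.univ.filter fun v => c v = i)} := by
    rintro n ⟨c, hcp⟩
    refine ⟨c, fun i => Or.inr ?_⟩
    intro x hx y hy hxy
    simp only [Finset.mem_filter] at hx hy
    exact hcp x y hxy (hx.2.trans hy.2.symm)
  have hAne : {n : ℕ | ∃ c : V → Fin n, ∀ i : Fin n,
      IsCliqueF G (Finset.univ.filter fun v => c v = i) ∨
      IsIndepF G (Finset.univ.filter fun v => c v = i)}.Nonempty := hBne.mono hsub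
  have h1 : cochrom G ≤ chrom G := by
    rw [cochrom, chrom]
    exact Nat.sInf_le (hsub (Nat.sInf_mem hBne))
  have hmem : ∃ c : V → Fin (cochrom G), ∀ i : Fin (cochrom G),
      IsCliqueF G (Finset.univ.filter fun v => c v = i) ∨
      IsIndepF G (Finset.univ.filter fun v => c v = i) := by
    rw [cochrom]
    exact Nat.sInf_mem hAne
  have key : ∀ (m : ℕ) (c : V → Fin m), (∀ i : Fin m,
      IsCliqueF G (Finset.univ.filter fun v => c v = i) ∨
      IsIndepF G (Finset.univ.filter fun v => c v = i)) → chrom G ≤ m := by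
    intro m c hcA
    have hparts : ∀ i : ℕ, IsCliqueF G (Finset.univ.filter fun v => (c v : ℕ) = i) ∨
        IsIndepF G (Finset.univ.filter fun v => (c v : ℕ) = i) := by
      intro i
      by_cases hin : i < m
      · have he : (Finset.univ.filter fun v => (c v : ℕ) = i) =
            Finset.univ.filter fun v => c v = ⟨i, hin⟩ := by
          ext w; simp [Fin.ext_iff]
        rw [he]
        exact hcA ⟨i, hin⟩
      · have he : (Finset.univ.filter fun v => (c v : ℕ) = i) = ∅ := by
          apply Finset.filter_eq_empty_iff.mpr
          intro w _
          have := (c w).isLt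
          omega
        rw [he]
        exact Or.inr (fun u hu => by simp at hu)
    obtain ⟨d, hdb, hdp⟩ := mainLemma htf (Fintype.card V) Finset.univ
      (le_of_eq Finset.card_univ) m (fun w => (c w : ℕ)) hparts (fun w _ => (c w).isLt)
    have hchrom_le : chrom G ≤ max m 2 := by
      rw [chrom]
      apply Nat.sInf_le
      exact ⟨fun w => ⟨d w, hdb w⟩, fun u v hadj h =>
        hdp u (Finset.mem_univ u) v (Finset.mem_univ v) hadj (congrArg Fin.val h)⟩
    rcases Nat.lt_or_ge m 2 with hmlt | hmge
    · have hm01 : m = 0 ∨ m = 1 := by omega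
      rcases hm01 with hm0 | hm1
      · haveI : IsEmpty V := ⟨fun v => Fin.elim0 (Fin.cast hm0 (c v))⟩
        have : chrom G ≤ 0 := by
          rw [chrom]
          exact Nat.sInf_le ⟨fun v => isEmptyElim v, fun u v _ => isEmptyElim u⟩
        omega
      · have hi0 : (0 : ℕ) < m := by omega
        have hfe : (Finset.univ.filter fun v => c v = (⟨0, hi0⟩ : Fin m)) =
            Finset.univ := by
          apply Finset.filter_eq_self.mpr
          intro w _
          apply Fin.ext
          show (c w : ℕ) = 0
          have := (c w).isLt
          omega
        have hchle1 : chrom G ≤ 1 := by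
          rcases hcA ⟨0, hi0⟩ with hclq | hind
          · rw [hfe] at hclq
            by_cases hind2 : IsIndepF G (Finset.univ : Finset V)
            · rw [chrom]
              exact Nat.sInf_le ⟨fun _ => (0 : Fin 1), fun u v hadj _ =>
                hind2 u (Finset.mem_univ u) v (Finset.mem_univ v) hadj⟩
            · exfalso
              obtain ⟨a, b, hab, habeq⟩ := clique_not_indep_eq htf hclq hind2
              have hallw : ∀ w : V, w = a ∨ w = b := by
                intro w
                have hw : w ∈ ({a, b} : Finset V) := habeq ▸ Finset.mem_univ w
                simpa using hw
              apply hK2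
              refine ⟨⟨⟨fun w => if w = a then 0 else 1,
                fun i => if i = 0 then a else b, ?_, ?_⟩, ?_⟩⟩
              · intro w
                rcases hallw w with rfl | rfl
                · simp
                · simp [hab.ne']
              · intro i
                fin_cases i
                · simp
                · simp [hab.ne']
              · intro x y
                simp only [SimpleGraph.completeGraph, SimpleGraph.top_adj, Equiv.coe_fn_mk]
                constructor
                · intro hne
                  have hxy : x ≠ y := fun h => hne (by rw [h])
                  exact hclq x (Finset.mem_univ x) y (Finset.mem_univ y) hxy
                · intro hadj
                  rcases hallw x with rfl | rfl <;> rcases hallw y with rfl | rfl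
                  · exact (G.irrefl hadj).elim
                  · simp [hab.ne']
                  · simp [hab.ne']
                  · exact (G.irrefl hadj).elim
          · rw [hfe] at hind
            rw [chrom]
            exact Nat.sInf_le ⟨fun _ => (0 : Fin 1), fun u v hadj _ =>
              hind u (Finset.mem_univ u) v (Finset.mem_univ v) hadj⟩
        omega
    · have := max_eq_left hmge
      omega
  obtain ⟨c, hcA⟩ := hmem
  exact le_antisymm h1 (key _ c hcA)
end

section
/- Let G be a finite simple graph and let k be an integer with k ≥ ω(G), where ω(G) is the clique number of G. Then the disjoint union kG of k copies of G satisfies Z(kG) = χ(kG) = χ(G). -/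
open Finset

/-- The disjoint union of `k` copies of `G`. -/
def copies {V : Type*} (k : ℕ) (G : SimpleGraph V) : SimpleGraph (Fin k × V) where
  Adj a b := a.1 = b.1 ∧ G.Adj a.2 b.2
  symm := ⟨fun _ _ h => ⟨h.1.symm, G.symm.symm _ _ h.2⟩⟩
  loopless := ⟨fun a h => G.loopless.irrefl a.2 h.2⟩

/-- The clique number: the largest size of a clique. -/
noncomputable def cliqueNumF {V : Type*} [Fintype V] (G : SimpleGraph V) : ℕ :=
  sSup {n : ℕ | ∃ s : Finset V, IsCliqueF G s ∧ s.card = n}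

lemma chromSet_nonempty {V : Type*} [Fintype V] (G : SimpleGraph V) :
    {n : ℕ | ∃ c : V → Fin n, ∀ u v, G.Adj u v → c u ≠ c v}.Nonempty :=
  ⟨Fintype.card V, Fintype.equivFin V, fun u v h hc =>
    G.ne_of_adj h ((Fintype.equivFin V).injective hc)⟩

lemma chrom_mem {V : Type*} [Fintype V] (G : SimpleGraph V) :
    ∃ c : V → Fin (chrom G), ∀ u v, G.Adj u v → c u ≠ c v :=
  Nat.sInf_mem (chromSet_nonempty G)

lemma cochromSet_nonempty {V : Type*} [Fintype V] [DecidableEq V] (G : SimpleGraph V) :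
    {n : ℕ | ∃ c : V → Fin n, ∀ i : Fin n,
      IsCliqueF G (Finset.univ.filter fun v => c v = i) ∨
      IsIndepF G (Finset.univ.filter fun v => c v = i)}.Nonempty := by
  refine ⟨Fintype.card V, Fintype.equivFin V, fun i => Or.inr ?_⟩
  intro u hu v hv hadj
  simp only [mem_filter] at hu hv
  have : u = v := (Fintype.equivFin V).injective (hu.2.trans hv.2.symm)
  exact G.loopless.irrefl v (this ▸ hadj)

lemma cochrom_mem {V : Type*} [Fintype V] [DecidableEq V] (G : SimpleGraph V) :
    ∃ c : V → Fin (cochrom G), ∀ i : Fin (cochrom G),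
      IsCliqueF G (Finset.univ.filter fun v => c v = i) ∨
      IsIndepF G (Finset.univ.filter fun v => c v = i) :=
  Nat.sInf_mem (cochromSet_nonempty G)

lemma card_le_cliqueNumF {V : Type*} [Fintype V] (G : SimpleGraph V) {s : Finset V}
    (hs : IsCliqueF G s) : s.card ≤ cliqueNumF G := by
  apply le_csSup
  · refine ⟨Fintype.card V, ?_⟩
    rintro n ⟨t, -, rfl⟩
    exact t.card_le_univ.trans_eq Finset.card_univ
  · exact ⟨s, hs, rfl⟩

lemma chrom_le {V : Type*} [Fintype V] (G : SimpleGraph V) {n : ℕ}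
    (c : V → Fin n) (h : ∀ u v, G.Adj u v → c u ≠ c v) : chrom G ≤ n :=
  Nat.sInf_le ⟨c, h⟩

lemma chrom_le_cochrom_copies {V : Type*} [Fintype V] [DecidableEq V]
    (G : SimpleGraph V) (k : ℕ) (hk : cliqueNumF G ≤ k) (hk1 : 0 < k) :
    chrom G ≤ cochrom (copies k G) := by
  classical
  obtain ⟨c, hc⟩ := cochrom_mem (copies k G)
  set S : Finset (Fin (cochrom (copies k G))) :=
    univ.filter (fun i => ¬ IsIndepF (copies k G) (univ.filter fun a => c a = i)) with hSdef
  have hSmem : ∀ i : Fin (cochrom (copies k G)), i ∈ S ↔ ¬ IsIndepF (copies k G) (univ.filter fun a => c a = i) := by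
    intro i; simp [hSdef]
  -- classes of colors in S are cliques
  have hcliq : ∀ i ∈ S, IsCliqueF (copies k G) (univ.filter fun a => c a = i) := by
    intro i hi
    rcases hc i with h | h
    · exact h
    · exact absurd h ((hSmem i).1 hi)
  -- class card bound
  have hcard : ∀ i ∈ S, (univ.filter fun a : Fin k × V => c a = i).card ≤ k := by
    intro i hi
    set cl := univ.filter (fun a : Fin k × V => c a = i) with hcl
    have hne : cl.Nonempty := by
      by_contra h
      rw [Finset.not_nonempty_iff_eq_empty] at h
      refine (hSmem i).1 hi ?_
      intro u hu
      rw [show (univ.filter fun a => c a = i) = cl from rfl, h] at hu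
      exact absurd hu (Finset.notMem_empty u)
    obtain ⟨a0, ha0⟩ := hne
    have hfst : ∀ a ∈ cl, a.1 = a0.1 := by
      intro a ha
      by_cases haa : a = a0
      · rw [haa]
      · exact (hcliq i hi a ha a0 ha0 haa).1
    have hinj : Set.InjOn Prod.snd (cl : Set (Fin k × V)) := by
      intro a ha b hb hab
      exact Prod.ext ((hfst a ha).trans (hfst b hb).symm) hab
    have hcardeq : cl.card = (cl.image Prod.snd).card :=
      (Finset.card_image_of_injOn hinj).symm
    have himgclique : IsCliqueF G (cl.image Prod.snd) := by
      intro u hu v hv huv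
      obtain ⟨a, ha, rfl⟩ := Finset.mem_image.1 hu
      obtain ⟨b, hb, rfl⟩ := Finset.mem_image.1 hv
      have hab : a ≠ b := fun h => huv (by rw [h])
      exact (hcliq i hi a ha b hb hab).2
    calc cl.card = (cl.image Prod.snd).card := hcardeq
      _ ≤ cliqueNumF G := card_le_cliqueNumF G himgclique
      _ ≤ k := hk
  -- pigeonhole
  set B : Fin k → Finset V := fun j => univ.filter (fun v => c (j, v) ∈ S) with hBdef
  set T : Finset (Fin k × V) := univ.filter (fun a => c a ∈ S) with hTdef
  have hT1 : ∑ j : Fin k, (B j).card = T.card := by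
    simp only [hBdef, hTdef, Finset.card_filter]
    rw [Fintype.sum_prod_type]
  have hT2 : T.card = ∑ i ∈ S, (univ.filter fun a : Fin k × V => c a = i).card := by
    rw [Finset.card_eq_sum_card_fiberwise (f := c) (s := T) (t := S)
      (fun a ha => (Finset.mem_filter.1 ha).2)]
    refine Finset.sum_congr rfl fun i hi => ?_
    congr 1
    ext a
    simp only [hTdef, Finset.mem_filter, Finset.mem_univ, true_and]
    constructor
    · exact fun h => h.2
    · exact fun h => ⟨h ▸ hi, h⟩
  have hsum : ∑ j : Fin k, (B j).card ≤ S.card * k := by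
    rw [hT1, hT2]
    calc ∑ i ∈ S, (univ.filter fun a : Fin k × V => c a = i).card
        ≤ ∑ _i ∈ S, k := Finset.sum_le_sum hcard
      _ = S.card * k := by rw [Finset.sum_const, smul_eq_mul]
  obtain ⟨j, hj⟩ : ∃ j : Fin k, (B j).card ≤ S.card := by
    by_contra h
    push_neg at h
    have h2 : k * (S.card + 1) ≤ ∑ j : Fin k, (B j).card := by
      calc k * (S.card + 1) = ∑ _j : Fin k, (S.card + 1) := by
            rw [Finset.sum_const, Finset.card_univ, Fintype.card_fin, smul_eq_mul]
        _ ≤ ∑ j : Fin k, (B j).card := Finset.sum_le_sum fun j _ => h j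
    have := h2.trans hsum
    nlinarith
  -- build the coloring
  have hBmem : ∀ v : V, v ∈ B j ↔ c (j, v) ∈ S := by
    intro v; simp [hBdef]
  have hcards : Fintype.card (B j) ≤ Fintype.card S := by
    simpa [Fintype.card_coe] using hj
  obtain ⟨e⟩ : Nonempty ((B j : Finset V) ↪ S) :=
    Function.Embedding.nonempty_of_card_le hcards
  refine chrom_le G (fun v =>
    if h : c (j, v) ∈ S then ((e ⟨v, (hBmem v).2 h⟩ : S) : Fin (cochrom (copies k G)))
    else c (j, v)) ?_
  intro u v hadj hEq
  have hne : u ≠ v := G.ne_of_adj hadj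
  by_cases hu : c (j, u) ∈ S <;> by_cases hv : c (j, v) ∈ S
  · rw [dif_pos hu, dif_pos hv] at hEq
    have := e.injective (Subtype.coe_injective hEq)
    exact hne (congrArg Subtype.val this)
  · rw [dif_pos hu, dif_neg hv] at hEq
    exact hv (hEq ▸ (e ⟨u, (hBmem u).2 hu⟩).2)
  · rw [dif_neg hu, dif_pos hv] at hEq
    exact hu (hEq.symm ▸ (e ⟨v, (hBmem v).2 hv⟩).2)
  · rw [dif_neg hu, dif_neg hv] at hEq
    have hindep : IsIndepF (copies k G) (univ.filter fun a => c a = c (j, u)) := by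
      by_contra h
      exact hu ((hSmem _).2 h)
    refine hindep (j, u) ?_ (j, v) ?_ ⟨rfl, hadj⟩
    · simp
    · simp [hEq]

lemma chrom_copies_le {V : Type*} [Fintype V] (G : SimpleGraph V) (k : ℕ) :
    chrom (copies k G) ≤ chrom G := by
  obtain ⟨c, hc⟩ := chrom_mem G
  exact chrom_le _ (fun a => c a.2) (fun u v h => hc u.2 v.2 h.2)

lemma chrom_le_chrom_copies {V : Type*} [Fintype V] (G : SimpleGraph V) (k : ℕ) (hk : 0 < k) :
    chrom G ≤ chrom (copies k G) := by
  obtain ⟨c, hc⟩ := chrom_mem (copies k G)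
  exact chrom_le _ (fun v => c (⟨0, hk⟩, v)) (fun u v h => hc _ _ ⟨rfl, h⟩)

lemma cochrom_le_chrom {V : Type*} [Fintype V] [DecidableEq V] (G : SimpleGraph V) :
    cochrom G ≤ chrom G := by
  obtain ⟨c, hc⟩ := chrom_mem G
  refine Nat.sInf_le ⟨c, fun i => Or.inr fun u hu v hv hadj => ?_⟩
  simp only [mem_filter] at hu hv
  exact hc u v hadj (hu.2.trans hv.2.symm)

/-- If `k ≥ ω(G)`, then `Z(kG) = χ(kG) = χ(G)`. -/
theorem cochrom_copies_eq_chrom {V : Type*} [Fintype V] [DecidableEq V]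
    (G : SimpleGraph V) (k : ℕ) (hk : cliqueNumF G ≤ k) :
    cochrom (copies k G) = chrom (copies k G) ∧ chrom (copies k G) = chrom G := by
  rcases Nat.eq_zero_or_pos k with rfl | hk1
  · have hV : IsEmpty V := by
      by_contra h
      rw [not_isEmpty_iff] at h
      obtain ⟨v⟩ := h
      have h1 : IsCliqueF G {v} := by
        intro u hu w hw huw
        simp only [Finset.mem_singleton] at hu hw
        exact absurd (hu.trans hw.symm) huw
      have h2 := card_le_cliqueNumF G h1
      simp only [Finset.card_singleton] at h2
      omega
    have h0 : chrom (copies 0 G) = 0 :=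
      Nat.le_zero.1 (chrom_le _ (fun a => a.1.elim0) (fun u v h => u.1.elim0))
    have h0' : cochrom (copies 0 G) = 0 :=
      Nat.le_zero.1 (Nat.sInf_le ⟨fun a => (a.1 : Fin 0).elim0, fun i => i.elim0⟩)
    have hG : chrom G = 0 :=
      Nat.le_zero.1 (chrom_le G (fun v => isEmptyElim v) (fun u v h => isEmptyElim u))
    exact ⟨by rw [h0, h0'], by rw [h0, hG]⟩
  · have h1 := cochrom_le_chrom (copies k G)
    have h2 := chrom_copies_le G k
    have h3 := chrom_le_chrom_copies G k hk1
    have h4 := chrom_le_cochrom_copies G k hk hk1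
    constructor <;> omega
end

section
/- For every integer t ≥ 1, the star K_{1,t} satisfies Z_f(K_{1,t}) = 2 - 1/t. -/
open Finset

/-- A fractional cocoloring: nonnegative weights on finsets, supported on cliques and
independent sets, covering every vertex with total weight at least 1. -/
def IsFracCocoloring {V : Type*} [Fintype V] [DecidableEq V] (G : SimpleGraph V)
    (w : Finset V → ℝ) : Prop :=
  (∀ s, 0 ≤ w s) ∧
  (∀ s, w s ≠ 0 → IsCliqueF G s ∨ IsIndepF G s) ∧
  (∀ v : V, 1 ≤ ∑ s ∈ Finset.univ.filter (fun s : Finset V => v ∈ s), w s)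

/-- The fractional cochromatic number: the least total weight of a fractional cocoloring. -/
noncomputable def Zf {V : Type*} [Fintype V] [DecidableEq V] (G : SimpleGraph V) : ℝ :=
  sInf {x | ∃ w, IsFracCocoloring G w ∧ x = ∑ s : Finset V, w s}

/-- The star `K_{1,t}`: vertex `0` is the center, adjacent to the `t` leaves. -/
def starGraph (t : ℕ) : SimpleGraph (Fin (t + 1)) where
  Adj u v := (u = 0 ∧ v ≠ 0) ∨ (v = 0 ∧ u ≠ 0)
  symm := ⟨by intro u v h; tauto⟩
  loopless := ⟨by intro u h; tauto⟩

/-- Lower bound. -/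
lemma star_lower (t : ℕ) (ht : 1 ≤ t) (w : Finset (Fin (t+1)) → ℝ)
    (hw : IsFracCocoloring (starGraph t) w) :
    2 - 1/(t:ℝ) ≤ ∑ s : Finset (Fin (t+1)), w s := by
  classical
  obtain ⟨hnn, hsup, hcov⟩ := hw
  have htR : (1:ℝ) ≤ t := by exact_mod_cast ht
  have ht0 : (0:ℝ) < t := by linarith
  set L : Finset (Fin (t+1)) := Finset.univ.erase 0 with hLdef
  have hLcard : L.card = t := by simp [hLdef]
  have hA : 1 ≤ ∑ s ∈ Finset.univ.filter (fun s => (0:Fin (t+1)) ∈ s), w s := hcov 0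
  have key : (t:ℝ) ≤ ∑ s : Finset (Fin (t+1)),
      (if (0:Fin (t+1)) ∈ s then 1 else (t:ℝ)) * w s := by
    have h1 : (t:ℝ) ≤ ∑ i ∈ L, ∑ s ∈ Finset.univ.filter (fun s => i ∈ s), w s := by
      calc (t:ℝ) = ∑ _i ∈ L, (1:ℝ) := by simp [hLcard]
        _ ≤ _ := Finset.sum_le_sum fun i _ => hcov i
    have h2 : ∑ i ∈ L, ∑ s ∈ Finset.univ.filter (fun s => i ∈ s), w s
        = ∑ s : Finset (Fin (t+1)), ((L.filter (· ∈ s)).card : ℝ) * w s := by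
      simp_rw [Finset.sum_filter]
      rw [Finset.sum_comm]
      refine Finset.sum_congr rfl fun s _ => ?_
      rw [← Finset.sum_filter, Finset.sum_const, nsmul_eq_mul]
    have h3 : ∀ s : Finset (Fin (t+1)),
        ((L.filter (· ∈ s)).card : ℝ) * w s ≤ (if (0:Fin (t+1)) ∈ s then 1 else (t:ℝ)) * w s := by
      intro s
      rcases eq_or_ne (w s) 0 with h0 | h0
      · simp [h0]
      · refine mul_le_mul_of_nonneg_right ?_ (hnn s)
        by_cases h0s : (0:Fin (t+1)) ∈ s
        · simp only [h0s, if_true]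
          rcases hsup s h0 with hc | hi
          · have : (L.filter (· ∈ s)).card ≤ 1 := by
              rw [Finset.card_le_one]
              intro a ha b hb
              simp only [Finset.mem_filter, hLdef, Finset.mem_erase] at ha hb
              by_contra hab
              have := hc a ha.2 b hb.2 hab
              simp only [starGraph] at this
              exact absurd this (by tauto)
            exact_mod_cast this
          · have : L.filter (· ∈ s) = ∅ := by
              rw [Finset.eq_empty_iff_forall_notMem]
              intro a ha
              simp only [Finset.mem_filter, hLdef, Finset.mem_erase] at ha
              exact hi 0 h0s a ha.2 (Or.inl ⟨rfl, ha.1.1⟩)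
            simp [this]
        · simp only [h0s, if_false]
          calc ((L.filter (· ∈ s)).card : ℝ) ≤ (L.card : ℝ) := by
                exact_mod_cast Finset.card_le_card (Finset.filter_subset _ _)
            _ = t := by rw [hLcard]
    exact le_trans h1 (h2 ▸ Finset.sum_le_sum fun s _ => h3 s)
  -- split the sum
  set A := ∑ s ∈ Finset.univ.filter (fun s => (0:Fin (t+1)) ∈ s), w s with hAdef
  set B := ∑ s ∈ Finset.univ.filter (fun s => (0:Fin (t+1)) ∉ s), w s with hBdef
  have hsplit : ∑ s : Finset (Fin (t+1)),
      (if (0:Fin (t+1)) ∈ s then 1 else (t:ℝ)) * w s = A + t * B := by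
    rw [hAdef, hBdef, Finset.mul_sum, ← Finset.sum_filter_add_sum_filter_not Finset.univ
      (fun s => (0:Fin (t+1)) ∈ s)]
    congr 1
    · refine Finset.sum_congr rfl fun s hs => ?_
      simp only [Finset.mem_filter] at hs
      simp [hs.2]
    · refine Finset.sum_congr rfl fun s hs => ?_
      simp only [Finset.mem_filter] at hs
      simp [hs.2]
  have hW : ∑ s : Finset (Fin (t+1)), w s = A + B :=
    (Finset.sum_filter_add_sum_filter_not Finset.univ (fun s => (0:Fin (t+1)) ∈ s) w).symm
  rw [hsplit] at key
  have hB0 : 0 ≤ B := Finset.sum_nonneg fun s _ => hnn s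
  rw [hW]
  have h1t : (t:ℝ) * (1/t) = 1 := by field_simp
  nlinarith [key, hA, hB0, htR, ht0, h1t]

/-- Upper bound witness. -/
lemma star_upper (t : ℕ) (ht : 1 ≤ t) :
    ∃ w : Finset (Fin (t+1)) → ℝ, IsFracCocoloring (starGraph t) w ∧
      2 - 1/(t:ℝ) = ∑ s : Finset (Fin (t+1)), w s := by
  classical
  have htR : (1:ℝ) ≤ t := by exact_mod_cast ht
  have ht0 : (0:ℝ) < t := by linarith
  have h1t : 1/(t:ℝ) ≤ 1 := by rw [div_le_one ht0]; exact htR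
  have h1t0 : (0:ℝ) ≤ 1/t := by positivity
  set L : Finset (Fin (t+1)) := Finset.univ.erase 0 with hLdef
  have hLcard : L.card = t := by simp [hLdef]
  refine ⟨fun s =>
    (∑ i ∈ L, if s = {0, i} then (1/t : ℝ) else 0) + (if s = L then (1 - 1/t : ℝ) else 0),
    ⟨?_, ?_, ?_⟩, ?_⟩
  · intro s
    refine add_nonneg (Finset.sum_nonneg fun i _ => ?_) ?_ <;> split <;> linarith
  · intro s hs
    by_cases hsL : s = L
    · right
      intro u hu v hv
      subst hsL
      rw [hLdef, Finset.mem_erase] at hu hv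
      simp only [starGraph]
      tauto
    · left
      have hsum : (∑ i ∈ L, if s = {0, i} then (1/t : ℝ) else 0) ≠ 0 := by
        simpa [hsL] using hs
      obtain ⟨i, hi, hne⟩ := Finset.exists_ne_zero_of_sum_ne_zero hsum
      have hsi : s = {0, i} := by by_contra h; simp [h] at hne
      rw [hLdef, Finset.mem_erase] at hi
      subst hsi
      intro u hu v hv huv
      simp only [Finset.mem_insert, Finset.mem_singleton] at hu hv
      simp only [starGraph]
      rcases hu with rfl | rfl <;> rcases hv with rfl | rfl <;> tauto
  · intro v
    have hrw : ∑ s ∈ Finset.univ.filter (fun s : Finset (Fin (t+1)) => v ∈ s),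
        ((∑ i ∈ L, if s = {0, i} then (1/t : ℝ) else 0) + (if s = L then (1 - 1/t : ℝ) else 0))
        = (∑ i ∈ L, if v ∈ ({0, i} : Finset (Fin (t+1))) then (1/t:ℝ) else 0)
          + (if v ∈ L then (1 - 1/t : ℝ) else 0) := by
      rw [Finset.sum_add_distrib]
      congr 1
      · rw [Finset.sum_comm]
        refine Finset.sum_congr rfl fun i _ => ?_
        rw [Finset.sum_ite_eq' (Finset.univ.filter (fun s : Finset (Fin (t+1)) => v ∈ s))
          ({0, i} : Finset (Fin (t+1))) (fun _ => (1/t:ℝ))]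
        simp
      · rw [Finset.sum_ite_eq' (Finset.univ.filter (fun s : Finset (Fin (t+1)) => v ∈ s))
          L (fun _ => (1 - 1/t:ℝ))]
        simp
    rw [hrw]
    by_cases hv0 : v = 0
    · subst hv0
      have : ∀ i ∈ L, (if (0:Fin (t+1)) ∈ ({0, i} : Finset (Fin (t+1))) then (1/t:ℝ) else 0)
          = 1/t := by intro i _; simp
      rw [Finset.sum_congr rfl this, Finset.sum_const, hLcard, nsmul_eq_mul]
      have : (0:Fin (t+1)) ∉ L := by simp [hLdef]
      rw [if_neg this]
      rw [mul_one_div, div_self (ne_of_gt ht0)]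
      linarith
    · have hvL : v ∈ L := by simp [hLdef, hv0]
      have : ∀ i ∈ L, (if v ∈ ({0, i} : Finset (Fin (t+1))) then (1/t:ℝ) else 0)
          = (if v = i then (1/t:ℝ) else 0) := by
        intro i _
        simp [Finset.mem_insert, Finset.mem_singleton, hv0]
      rw [Finset.sum_congr rfl this, Finset.sum_ite_eq L v (fun _ => (1/t:ℝ)),
        if_pos hvL, if_pos hvL]
      linarith
  · rw [Finset.sum_add_distrib, Finset.sum_comm]
    have h1 : ∑ i ∈ L, ∑ s : Finset (Fin (t+1)), (if s = {0, i} then (1/t : ℝ) else 0)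
        = 1 := by
      have : ∀ i ∈ L, ∑ s : Finset (Fin (t+1)), (if s = {0, i} then (1/t : ℝ) else 0)
          = 1/t := by
        intro i _
        rw [Finset.sum_ite_eq' Finset.univ ({0,i} : Finset (Fin (t+1))) (fun _ => (1/t:ℝ))]
        simp
      rw [Finset.sum_congr rfl this, Finset.sum_const, hLcard, nsmul_eq_mul,
        mul_one_div, div_self (ne_of_gt ht0)]
    have h2 : ∑ s : Finset (Fin (t+1)), (if s = L then (1 - 1/t:ℝ) else 0) = 1 - 1/t := by
      rw [Finset.sum_ite_eq' Finset.univ L (fun _ => (1 - 1/t:ℝ))]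
      simp
    rw [h1, h2]; ring

/-- For every `t ≥ 1`, `Z_f(K_{1,t}) = 2 - 1/t`. -/
theorem Zf_star (t : ℕ) (ht : 1 ≤ t) :
    Zf (starGraph t) = 2 - 1 / (t : ℝ) := by
  have lb : ∀ x ∈ {x | ∃ w, IsFracCocoloring (starGraph t) w ∧
      x = ∑ s : Finset (Fin (t+1)), w s}, 2 - 1/(t:ℝ) ≤ x := by
    rintro x ⟨w', hw', rfl⟩
    exact star_lower t ht w' hw'
  obtain ⟨w, hw, hsum⟩ := star_upper t ht
  apply le_antisymm
  · exact csInf_le ⟨2 - 1/t, lb⟩ ⟨w, hw, hsum⟩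
  · exact le_csInf ⟨_, w, hw, hsum⟩ lb
end

section
/- For all integers s, t ≥ 1, the graph consisting of a star K_{1,t} together with s additional isolated vertices satisfies Z_f(K_{1,t} ∪ K_s^c) = 2 - 1/(t+1). -/
open Finset

namespace ZfStarAux

variable {t s : ℕ} [NeZero s]

/-- Any edge of the graph has the star center as an endpoint. -/
lemma adj_center {u v : Fin (t+1) ⊕ Fin s}
    (h : (starGraph t ⊕g (⊥ : SimpleGraph (Fin s))).Adj u v) :
    u = Sum.inl 0 ∨ v = Sum.inl 0 := by
  cases u <;> cases v <;> simp_all [SimpleGraph.sum_adj, starGraph] <;> tauto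

/-- The dual weights. -/
noncomputable def y (t s : ℕ) [NeZero s] : Fin (t+1) ⊕ Fin s → ℝ
  | Sum.inl i => if i = 0 then t/(t+1) else 1/(t+1)
  | Sum.inr j => if j = 0 then 1/(t+1) else 0

@[simp] lemma y_inl (i : Fin (t+1)) :
    y t s (Sum.inl i) = if i = 0 then (t:ℝ)/(t+1) else 1/(t+1) := rfl

@[simp] lemma y_inr (j : Fin s) :
    y t s (Sum.inr j) = if j = 0 then 1/((t:ℝ)+1) else 0 := rfl

lemma hden : (0:ℝ) < (t:ℝ) + 1 := by positivity

lemma y_nonneg (v : Fin (t+1) ⊕ Fin s) : 0 ≤ y t s v := by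
  have := hden (t := t)
  cases v with
  | inl i => rw [y_inl]; split <;> positivity
  | inr j => rw [y_inr]; split <;> positivity

lemma y_le {v : Fin (t+1) ⊕ Fin s} (hv : v ≠ Sum.inl 0) : y t s v ≤ 1/((t:ℝ)+1) := by
  have := hden (t := t)
  cases v with
  | inl i =>
    have hi : i ≠ 0 := by intro h; exact hv (by rw [h])
    simp [y_inl, hi]
  | inr j =>
    rw [y_inr]
    split
    · exact le_rfl
    · positivity

lemma sum_y (hs : 1 ≤ s) : ∑ v, y t s v = 2 - 1/((t:ℝ)+1) := by
  haveI : NeZero s := ⟨by omega⟩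
  have hd := hden (t := t)
  rw [Fintype.sum_sum_type]
  have h1 : ∑ i : Fin (t+1), y t s (Sum.inl i) = (t:ℝ)/(t+1) + t * (1/(t+1)) := by
    rw [Fin.sum_univ_succ]
    simp [y_inl, Fin.succ_ne_zero, mul_comm]
  have h2 : ∑ j : Fin s, y t s (Sum.inr j) = 1/((t:ℝ)+1) := by
    simp only [y_inr]
    rw [Finset.sum_ite_eq' Finset.univ (0 : Fin s) (fun _ => 1/((t:ℝ)+1))]
    simp
  rw [h1, h2]
  field_simp
  ring

/-- Dual feasibility: cliques and independent sets have `y`-weight at most 1. -/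
lemma y_sum_le (hs : 1 ≤ s) (S : Finset (Fin (t+1) ⊕ Fin s))
    (h : IsCliqueF (starGraph t ⊕g (⊥ : SimpleGraph (Fin s))) S ∨
         IsIndepF (starGraph t ⊕g (⊥ : SimpleGraph (Fin s))) S) :
    ∑ v ∈ S, y t s v ≤ 1 := by
  have hd := hden (t := t)
  have hc1 : (t:ℝ)/(t+1) + 1/((t:ℝ)+1) = 1 := by field_simp
  by_cases hc : Sum.inl 0 ∈ S
  · rcases h with hclq | hind
    · -- clique containing the center
      by_cases hex : ∃ v ∈ S, v ≠ Sum.inl 0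
      · obtain ⟨v, hvS, hv⟩ := hex
        have hSsub : S ⊆ {Sum.inl 0, v} := by
          intro u hu
          by_contra hun
          simp only [mem_insert, mem_singleton, not_or] at hun
          have hadj := hclq u hu v hvS (by tauto)
          rcases adj_center hadj with h' | h' <;> tauto
        calc ∑ x ∈ S, y t s x ≤ ∑ x ∈ ({Sum.inl 0, v} : Finset _), y t s x :=
              Finset.sum_le_sum_of_subset_of_nonneg hSsub (fun x _ _ => y_nonneg x)
          _ = y t s (Sum.inl 0) + y t s v := Finset.sum_pair (Ne.symm hv)
          _ ≤ (t:ℝ)/(t+1) + 1/((t:ℝ)+1) := by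
              have := y_le (t := t) (s := s) hv
              rw [y_inl, if_pos rfl]
              linarith
          _ = 1 := hc1
      · push_neg at hex
        have hSsub : S ⊆ {Sum.inl 0} := fun u hu => by
          simp [hex u hu]
        calc ∑ x ∈ S, y t s x ≤ ∑ x ∈ ({Sum.inl 0} : Finset _), y t s x :=
              Finset.sum_le_sum_of_subset_of_nonneg hSsub (fun x _ _ => y_nonneg x)
          _ = y t s (Sum.inl 0) := Finset.sum_singleton _ _
          _ ≤ 1 := by
              rw [y_inl, if_pos rfl, div_le_one hd]; linarith
    · -- independent set containing the center: no leaves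
      have hSsub : S ⊆ insert (Sum.inl 0) (Finset.univ.image Sum.inr) := by
        intro u hu
        cases u with
        | inl i =>
          have : i = 0 := by
            by_contra hi
            have hadj : (starGraph t ⊕g (⊥ : SimpleGraph (Fin s))).Adj (Sum.inl 0) (Sum.inl i) := by
              simp [SimpleGraph.sum_adj, starGraph, hi]
            exact hind _ hc _ hu hadj
          simp [this]
        | inr j => simp
      have hnotmem : (Sum.inl 0 : Fin (t+1) ⊕ Fin s) ∉ Finset.univ.image Sum.inr := by simp
      calc ∑ x ∈ S, y t s x ≤ ∑ x ∈ insert (Sum.inl 0) (Finset.univ.image Sum.inr), y t s x :=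
            Finset.sum_le_sum_of_subset_of_nonneg hSsub (fun x _ _ => y_nonneg x)
        _ = y t s (Sum.inl 0) + ∑ j : Fin s, y t s (Sum.inr j) := by
            rw [Finset.sum_insert hnotmem, Finset.sum_image (fun a _ b _ h => Sum.inr_injective h)]
        _ = 1 := by
            simp only [y_inl, y_inr, if_pos rfl]
            rw [Finset.sum_ite_eq' Finset.univ (0 : Fin s) (fun _ => 1/((t:ℝ)+1))]
            simpa using hc1
  · -- set not containing the center
    calc ∑ x ∈ S, y t s x ≤ ∑ x ∈ Finset.univ.erase (Sum.inl 0), y t s x := by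
          refine Finset.sum_le_sum_of_subset_of_nonneg ?_ (fun x _ _ => y_nonneg x)
          intro u hu
          exact Finset.mem_erase.mpr ⟨fun h => hc (h ▸ hu), Finset.mem_univ u⟩
      _ = (∑ v, y t s v) - y t s (Sum.inl 0) :=
          Finset.sum_erase_eq_sub (Finset.mem_univ _)
      _ = 1 := by
          rw [sum_y hs, y_inl, if_pos rfl]
          field_simp
          ring

/-- Weak LP duality: any fractional cocoloring has total weight at least `2 - 1/(t+1)`. -/
lemma total_ge (hs : 1 ≤ s) (w : Finset (Fin (t+1) ⊕ Fin s) → ℝ)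
    (hw : IsFracCocoloring (starGraph t ⊕g (⊥ : SimpleGraph (Fin s))) w) :
    2 - 1/((t:ℝ)+1) ≤ ∑ S : Finset (Fin (t+1) ⊕ Fin s), w S := by
  obtain ⟨hw0, hwsupp, hwcov⟩ := hw
  calc 2 - 1/((t:ℝ)+1) = ∑ v, y t s v := (sum_y hs).symm
    _ ≤ ∑ v, y t s v * ∑ S ∈ Finset.univ.filter (fun S => v ∈ S), w S := by
        refine Finset.sum_le_sum fun v _ => ?_
        exact le_mul_of_one_le_right (y_nonneg v) (hwcov v)
    _ = ∑ v, ∑ S : Finset (Fin (t+1) ⊕ Fin s), (if v ∈ S then y t s v * w S else 0) := by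
        refine Finset.sum_congr rfl fun v _ => ?_
        rw [Finset.mul_sum, ← Finset.sum_filter]
    _ = ∑ S : Finset (Fin (t+1) ⊕ Fin s), ∑ v, (if v ∈ S then y t s v * w S else 0) :=
        Finset.sum_comm
    _ = ∑ S : Finset (Fin (t+1) ⊕ Fin s), w S * ∑ v ∈ S, y t s v := by
        refine Finset.sum_congr rfl fun S _ => ?_
        rw [Finset.sum_ite_mem, Finset.univ_inter, ← Finset.sum_mul, mul_comm]
    _ ≤ ∑ S : Finset (Fin (t+1) ⊕ Fin s), w S := by
        refine Finset.sum_le_sum fun S _ => ?_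
        by_cases h : w S = 0
        · simp [h]
        · exact mul_le_of_le_one_right (hw0 S) (y_sum_le hs S (hwsupp S h))

/-- The primal weights. -/
noncomputable def wgt (t s : ℕ) : Finset (Fin (t+1) ⊕ Fin s) → ℝ := fun S =>
  (∑ i ∈ Finset.univ.filter (fun i : Fin (t+1) => i ≠ 0),
      if S = ({Sum.inl 0, Sum.inl i} : Finset (Fin (t+1) ⊕ Fin s)) then (1:ℝ)/(t+1) else 0)
  + (if S = Finset.univ.erase (Sum.inl 0) then (t:ℝ)/(t+1) else 0)
  + (if S = insert (Sum.inl 0) (Finset.univ.image Sum.inr) then (1:ℝ)/(t+1) else 0)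

lemma wgt_nonneg (S : Finset (Fin (t+1) ⊕ Fin s)) : 0 ≤ wgt t s S := by
  have hd := hden (t := t)
  unfold wgt
  have h1 : (0:ℝ) ≤ ∑ i ∈ Finset.univ.filter (fun i : Fin (t+1) => i ≠ 0),
      if S = ({Sum.inl 0, Sum.inl i} : Finset (Fin (t+1) ⊕ Fin s)) then (1:ℝ)/(t+1) else 0 := by
    refine Finset.sum_nonneg fun i _ => ?_
    split <;> positivity
  have h2 : (0:ℝ) ≤ if S = Finset.univ.erase (Sum.inl 0 : Fin (t+1) ⊕ Fin s)
      then (t:ℝ)/(t+1) else 0 := by split <;> positivity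
  have h3 : (0:ℝ) ≤ if S = insert (Sum.inl 0) (Finset.univ.image Sum.inr)
      then (1:ℝ)/((t:ℝ)+1) else 0 := by split <;> positivity
  linarith

lemma wgt_supp (S : Finset (Fin (t+1) ⊕ Fin s)) (h : wgt t s S ≠ 0) :
    IsCliqueF (starGraph t ⊕g (⊥ : SimpleGraph (Fin s))) S ∨
    IsIndepF (starGraph t ⊕g (⊥ : SimpleGraph (Fin s))) S := by
  by_cases hE : ∃ i : Fin (t+1), i ≠ 0 ∧ S = ({Sum.inl 0, Sum.inl i} : Finset _)
  · obtain ⟨i, hi, rfl⟩ := hE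
    left
    intro u hu v hv huv
    simp only [mem_insert, mem_singleton] at hu hv
    rcases hu with rfl | rfl <;> rcases hv with rfl | rfl <;>
      first
        | exact absurd rfl huv
        | simp [SimpleGraph.sum_adj, starGraph, hi]
  · by_cases hA : S = Finset.univ.erase (Sum.inl 0)
    · right
      subst hA
      intro u hu v hv hadj
      rcases adj_center hadj with h' | h' <;>
        simp_all
    · by_cases hB : S = insert (Sum.inl 0) (Finset.univ.image Sum.inr)
      · right
        subst hB
        intro u hu v hv hadj
        simp only [mem_insert, mem_image, mem_univ, true_and] at hu hv
        rcases hu with rfl | ⟨a, rfl⟩ <;> rcases hv with rfl | ⟨b, rfl⟩ <;>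
          simp_all [SimpleGraph.sum_adj, starGraph]
      · exfalso
        apply h
        unfold wgt
        rw [if_neg hA, if_neg hB]
        have : ∀ i ∈ Finset.univ.filter (fun i : Fin (t+1) => i ≠ 0),
            (if S = ({Sum.inl 0, Sum.inl i} : Finset (Fin (t+1) ⊕ Fin s))
              then (1:ℝ)/(t+1) else 0) = 0 := by
          intro i hi
          rw [if_neg]
          intro hSe
          exact hE ⟨i, (Finset.mem_filter.mp hi).2, hSe⟩
        rw [Finset.sum_congr rfl this]
        simp

lemma single_sum (v : Fin (t+1) ⊕ Fin s) (a : Finset (Fin (t+1) ⊕ Fin s)) (c : ℝ) :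
    ∑ S : Finset (Fin (t+1) ⊕ Fin s), (if v ∈ S then (if S = a then c else 0) else 0)
      = if v ∈ a then c else 0 := by
  rw [Finset.sum_eq_single_of_mem a (Finset.mem_univ a)]
  · simp
  · intro b _ hb
    simp [hb]

lemma wgt_cover (hs : 1 ≤ s) (v : Fin (t+1) ⊕ Fin s) :
    1 ≤ ∑ S ∈ Finset.univ.filter (fun S : Finset (Fin (t+1) ⊕ Fin s) => v ∈ S), wgt t s S := by
  haveI : NeZero s := ⟨by omega⟩
  have hd := hden (t := t)
  rw [Finset.sum_filter]
  have hsplit : ∀ S : Finset (Fin (t+1) ⊕ Fin s),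
      (if v ∈ S then wgt t s S else 0)
      = (∑ i ∈ Finset.univ.filter (fun i : Fin (t+1) => i ≠ 0),
          (if v ∈ S then (if S = ({Sum.inl 0, Sum.inl i} : Finset _) then (1:ℝ)/(t+1) else 0) else 0))
        + (if v ∈ S then (if S = Finset.univ.erase (Sum.inl 0) then (t:ℝ)/(t+1) else 0) else 0)
        + (if v ∈ S then (if S = insert (Sum.inl 0) (Finset.univ.image Sum.inr) then (1:ℝ)/(t+1) else 0) else 0) := by
    intro S
    unfold wgt
    split
    · rfl
    · simp
  rw [Finset.sum_congr rfl (fun S _ => hsplit S)]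
  rw [Finset.sum_add_distrib, Finset.sum_add_distrib, Finset.sum_comm]
  rw [single_sum, single_sum]
  have hX : ∀ i ∈ Finset.univ.filter (fun i : Fin (t+1) => i ≠ 0),
      (∑ S : Finset (Fin (t+1) ⊕ Fin s),
        (if v ∈ S then (if S = ({Sum.inl 0, Sum.inl i} : Finset _) then (1:ℝ)/(t+1) else 0) else 0))
      = if v ∈ ({Sum.inl 0, Sum.inl i} : Finset (Fin (t+1) ⊕ Fin s)) then (1:ℝ)/(t+1) else 0 :=
    fun i _ => single_sum v _ _
  rw [Finset.sum_congr rfl hX]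
  have hcard : (Finset.univ.filter (fun i : Fin (t+1) => i ≠ 0)).card = t := by
    rw [Finset.filter_ne' Finset.univ (0 : Fin (t+1))]
    simp
  cases v with
  | inl k =>
    by_cases hk : k = 0
    · subst hk
      have h1 : ∀ i ∈ Finset.univ.filter (fun i : Fin (t+1) => i ≠ 0),
          (if (Sum.inl 0 : Fin (t+1) ⊕ Fin s) ∈ ({Sum.inl 0, Sum.inl i} : Finset _)
            then (1:ℝ)/(t+1) else 0) = (1:ℝ)/(t+1) := by
        intro i _; simp
      rw [Finset.sum_congr rfl h1, Finset.sum_const, hcard]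
      simp only [Finset.mem_erase, Finset.mem_insert]
      norm_num
      have hkey : (t:ℝ) * ((t:ℝ)+1)⁻¹ + ((t:ℝ)+1)⁻¹ = 1 := by field_simp
      linarith
    · have h1 : ∀ i ∈ Finset.univ.filter (fun i : Fin (t+1) => i ≠ 0),
          (if (Sum.inl k : Fin (t+1) ⊕ Fin s) ∈ ({Sum.inl 0, Sum.inl i} : Finset _)
            then (1:ℝ)/(t+1) else 0) = (if i = k then (1:ℝ)/(t+1) else 0) := by
        intro i _
        simp only [Finset.mem_insert, Finset.mem_singleton, Sum.inl.injEq]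
        by_cases hik : i = k
        · simp [hik]
        · rw [if_neg, if_neg hik]
          push_neg
          exact ⟨hk, fun h => hik h.symm⟩
      rw [Finset.sum_congr rfl h1]
      rw [Finset.sum_ite_eq' (Finset.univ.filter (fun i : Fin (t+1) => i ≠ 0)) k]
      rw [if_pos (by simp [hk])]
      have hmA : (Sum.inl k : Fin (t+1) ⊕ Fin s) ∈ Finset.univ.erase (Sum.inl 0) := by
        simp [hk]
      rw [if_pos hmA, if_neg (by simp [hk])]
      have hkey : (1:ℝ)/((t:ℝ)+1) + (t:ℝ)/((t:ℝ)+1) + 0 = 1 := by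
        field_simp
        ring
      linarith
  | inr j =>
    have h1 : ∀ i ∈ Finset.univ.filter (fun i : Fin (t+1) => i ≠ 0),
        (if (Sum.inr j : Fin (t+1) ⊕ Fin s) ∈ ({Sum.inl 0, Sum.inl i} : Finset _)
          then (1:ℝ)/(t+1) else 0) = 0 := by
      intro i _; simp
    rw [Finset.sum_congr rfl h1, Finset.sum_const_zero]
    rw [if_pos (by simp), if_pos (by simp)]
    have : (0:ℝ) + (t:ℝ)/(t+1) + 1/((t:ℝ)+1) = 1 := by field_simp; ring
    linarith [this]

lemma wgt_total (hs : 1 ≤ s) :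
    ∑ S : Finset (Fin (t+1) ⊕ Fin s), wgt t s S = 2 - 1/((t:ℝ)+1) := by
  have hd := hden (t := t)
  unfold wgt
  rw [Finset.sum_add_distrib, Finset.sum_add_distrib, Finset.sum_comm]
  have h1 : ∀ i ∈ Finset.univ.filter (fun i : Fin (t+1) => i ≠ 0),
      (∑ S : Finset (Fin (t+1) ⊕ Fin s),
        if S = ({Sum.inl 0, Sum.inl i} : Finset _) then (1:ℝ)/(t+1) else 0) = (1:ℝ)/(t+1) := by
    intro i _
    rw [Finset.sum_ite_eq' Finset.univ]
    simp
  rw [Finset.sum_congr rfl h1, Finset.sum_const]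
  have hcard : (Finset.univ.filter (fun i : Fin (t+1) => i ≠ 0)).card = t := by
    rw [Finset.filter_ne' Finset.univ (0 : Fin (t+1))]
    simp
  rw [hcard]
  rw [Finset.sum_ite_eq' Finset.univ, Finset.sum_ite_eq' Finset.univ]
  simp only [Finset.mem_univ, if_pos]
  field_simp
  have h1t : (1 + (t:ℝ)) ≠ 0 := by positivity
  ring_nf
  field_simp
  ring

end ZfStarAux

/-- For all `s, t ≥ 1`, the disjoint union of the star `K_{1,t}` with `s`
isolated vertices satisfies `Z_f(K_{1,t} ∪ K_s^c) = 2 - 1/(t+1)`. -/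
theorem Zf_star_union_isolated (t s : ℕ) (ht : 1 ≤ t) (hs : 1 ≤ s) :
    Zf (starGraph t ⊕g (⊥ : SimpleGraph (Fin s))) = 2 - 1 / ((t : ℝ) + 1) := by
  haveI : NeZero s := ⟨by omega⟩
  unfold Zf
  have hmem : (2 - 1 / ((t:ℝ) + 1)) ∈
      {x | ∃ w, IsFracCocoloring (starGraph t ⊕g (⊥ : SimpleGraph (Fin s))) w ∧
        x = ∑ S : Finset (Fin (t+1) ⊕ Fin s), w S} := by
    exact ⟨ZfStarAux.wgt t s,
      ⟨fun S => ZfStarAux.wgt_nonneg S, fun S h => ZfStarAux.wgt_supp S h,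
        fun v => ZfStarAux.wgt_cover hs v⟩,
      (ZfStarAux.wgt_total hs).symm⟩
  have hlb : ∀ x ∈ {x | ∃ w, IsFracCocoloring (starGraph t ⊕g (⊥ : SimpleGraph (Fin s))) w ∧
      x = ∑ S : Finset (Fin (t+1) ⊕ Fin s), w S}, 2 - 1 / ((t:ℝ) + 1) ≤ x := by
    rintro x ⟨w, hw, rfl⟩
    exact ZfStarAux.total_ge hs w hw
  exact le_antisymm (csInf_le ⟨_, hlb⟩ hmem) (le_csInf ⟨_, hmem⟩ hlb)
end

section
/- If G is a finite vertex-transitive simple graph on n vertices and k = max{α(G), ω(G)}, then Z_f(G) = n/k. -/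
open Finset

/-- The independence number: the largest size of an independent set. -/
noncomputable def indepNumF {V : Type*} [Fintype V] (G : SimpleGraph V) : ℕ :=
  sSup {n : ℕ | ∃ s : Finset V, IsIndepF G s ∧ s.card = n}

set_option linter.unusedSectionVars false

section Aux

variable {V : Type*} [Fintype V] [DecidableEq V] {G : SimpleGraph V}

noncomputable instance : Fintype (G ≃g G) := by
  classical exact Fintype.ofInjective (fun e => (e : V ≃ V)) (fun a b h => by
    ext v; exact congrFun (congrArg (fun (e : V ≃ V) => (e : V → V)) h) v)

lemma indep_image (φ : G ≃g G) {S : Finset V} (h : IsIndepF G S) :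
    IsIndepF G (S.image φ) := by
  intro u hu v hv hadj
  simp only [mem_image] at hu hv
  obtain ⟨a, ha, rfl⟩ := hu; obtain ⟨b, hb, rfl⟩ := hv
  exact h a ha b hb (φ.map_adj_iff.mp hadj)

lemma clique_image (φ : G ≃g G) {S : Finset V} (h : IsCliqueF G S) :
    IsCliqueF G (S.image φ) := by
  intro u hu v hv hne
  simp only [mem_image] at hu hv
  obtain ⟨a, ha, rfl⟩ := hu; obtain ⟨b, hb, rfl⟩ := hv
  exact φ.map_adj_iff.mpr (h a ha b hb (fun hab => hne (by rw [hab])))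

lemma cover_const (hvt : ∀ u v : V, ∃ e : G ≃g G, e u = v) (S : Finset V) (v v' : V) :
    (univ.filter (fun φ : G ≃g G => v ∈ S.image φ)).card
      = (univ.filter (fun φ : G ≃g G => v' ∈ S.image φ)).card := by
  obtain ⟨ψ, hψ⟩ := hvt v v'
  have hsymm : ψ.symm v' = v := by rw [← hψ]; exact ψ.symm_apply_apply v
  apply Finset.card_nbij' (fun φ => φ.trans ψ) (fun φ => φ.trans ψ.symm)
  · intro φ hφ
    simp only [mem_coe, mem_filter, mem_univ, true_and, mem_image] at hφ ⊢
    obtain ⟨a, ha, hav⟩ := hφ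
    exact ⟨a, ha, by simp [RelIso.trans_apply, hav, hψ]⟩
  · intro φ hφ
    simp only [mem_coe, mem_filter, mem_univ, true_and, mem_image] at hφ ⊢
    obtain ⟨a, ha, hav⟩ := hφ
    exact ⟨a, ha, by simp [RelIso.trans_apply, hav, hsymm]⟩
  · intro φ _
    exact RelIso.ext (fun x => by simp)
  · intro φ _
    exact RelIso.ext (fun x => by simp)

lemma cover_sum (S : Finset V) :
    ∑ v : V, (univ.filter (fun φ : G ≃g G => v ∈ S.image φ)).card
      = Fintype.card (G ≃g G) * S.card := by
  have h1 : ∀ v : V, (univ.filter (fun φ : G ≃g G => v ∈ S.image φ)).card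
      = ∑ φ : G ≃g G, if v ∈ S.image φ then 1 else 0 := fun v =>
    Finset.card_filter _ _
  simp only [h1]
  rw [Finset.sum_comm]
  have h2 : ∀ φ : G ≃g G, (∑ v : V, if v ∈ S.image φ then 1 else 0) = S.card := by
    intro φ
    rw [← Finset.card_filter, Finset.filter_univ_mem,
      Finset.card_image_of_injective _ φ.injective]
  simp only [h2, Finset.sum_const, Finset.card_univ, smul_eq_mul]

lemma fiber_sum (v : V) (S : Finset V) :
    ∑ s ∈ univ.filter (fun s : Finset V => v ∈ s),
        ((univ.filter (fun φ : G ≃g G => S.image φ = s)).card : ℝ)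
      = ((univ.filter (fun φ : G ≃g G => v ∈ S.image φ)).card : ℝ) := by
  have h := Finset.card_eq_sum_card_fiberwise
    (s := univ.filter (fun φ : G ≃g G => v ∈ S.image φ))
    (t := univ.filter (fun s : Finset V => v ∈ s))
    (f := fun φ : G ≃g G => S.image ⇑φ)
    (fun φ hφ => by simp only [mem_coe, mem_filter, mem_univ, true_and] at hφ ⊢; exact hφ)
  rw [h]
  push_cast
  apply Finset.sum_congr rfl
  intro b hb
  simp only [mem_filter, mem_univ, true_and] at hb
  norm_cast
  apply congrArg Finset.card
  rw [Finset.filter_filter]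
  ext φ
  simp only [mem_filter, mem_univ, true_and]
  constructor
  · intro h; exact ⟨by rw [h]; exact hb, h⟩
  · intro h; exact h.2

lemma fiber_total (S : Finset V) :
    ∑ s : Finset V, ((univ.filter (fun φ : G ≃g G => S.image φ = s)).card : ℝ)
      = (Fintype.card (G ≃g G) : ℝ) := by
  have h := Finset.card_eq_sum_card_fiberwise
    (s := (univ : Finset (G ≃g G))) (t := (univ : Finset (Finset V)))
    (f := fun φ : G ≃g G => S.image ⇑φ) (fun φ _ => mem_univ _)
  rw [← Finset.card_univ, h]
  push_cast
  rfl

lemma exists_good (hvt : ∀ u v : V, ∃ e : G ≃g G, e u = v) (S : Finset V)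
    (hS : IsCliqueF G S ∨ IsIndepF G S) (hne : S.Nonempty) :
    ∃ w, IsFracCocoloring G w ∧
      ∑ s : Finset V, w s = (Fintype.card V : ℝ) / (S.card : ℝ) := by
  obtain ⟨u, hu⟩ := hne
  have hVne : Nonempty V := ⟨u⟩
  set C : ℕ := (univ.filter (fun φ : G ≃g G => u ∈ S.image φ)).card with hC
  have hCpos : 0 < C := by
    obtain ⟨φ, hφ⟩ := hvt u u
    refine Finset.card_pos.mpr ⟨φ, ?_⟩
    simp only [mem_filter, mem_univ, true_and, mem_image]
    exact ⟨u, hu, hφ⟩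
  have hCconst : ∀ v : V,
      (univ.filter (fun φ : G ≃g G => v ∈ S.image φ)).card = C :=
    fun v => cover_const hvt S v u
  -- n * C = |A| * |S|
  have hkey : Fintype.card V * C = Fintype.card (G ≃g G) * S.card := by
    rw [← cover_sum S]
    simp only [hCconst, Finset.sum_const, Finset.card_univ, smul_eq_mul]
  refine ⟨fun s => ((univ.filter (fun φ : G ≃g G => S.image φ = s)).card : ℝ) / C,
    ⟨fun s => by positivity, ?_, ?_⟩, ?_⟩
  · intro s hs
    have : (univ.filter (fun φ : G ≃g G => S.image φ = s)).Nonempty := by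
      rw [Finset.nonempty_iff_ne_empty]
      intro h
      apply hs
      simp [h]
    obtain ⟨φ, hφ⟩ := this
    simp only [mem_filter, mem_univ, true_and] at hφ
    rcases hS with h | h
    · exact Or.inl (hφ ▸ clique_image φ h)
    · exact Or.inr (hφ ▸ indep_image φ h)
  · intro v
    rw [← Finset.sum_div, fiber_sum v S, hCconst v]
    rw [div_self (by exact_mod_cast hCpos.ne')]
  · rw [← Finset.sum_div, fiber_total S]
    rw [div_eq_div_iff (by exact_mod_cast hCpos.ne') (by exact_mod_cast (Finset.card_pos.mpr ⟨u, hu⟩).ne')]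
    exact_mod_cast hkey.symm

lemma lower_bound (w : Finset V → ℝ) (hw : IsFracCocoloring G w) (k : ℕ)
    (hk1 : 1 ≤ k) (hcard : ∀ s : Finset V, w s ≠ 0 → s.card ≤ k) :
    (Fintype.card V : ℝ) / k ≤ ∑ s : Finset V, w s := by
  have key : ∑ s : Finset V, w s * s.card
      = ∑ v : V, ∑ s ∈ univ.filter (fun s : Finset V => v ∈ s), w s := by
    simp only [Finset.sum_filter]
    rw [Finset.sum_comm]
    apply Finset.sum_congr rfl
    intro s _
    rw [← Finset.sum_filter, Finset.filter_univ_mem, Finset.sum_const, nsmul_eq_mul, mul_comm]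
  have h1 : (Fintype.card V : ℝ) ≤ ∑ s : Finset V, w s * s.card := by
    rw [key]
    calc (Fintype.card V : ℝ) = ∑ _v : V, (1 : ℝ) := by simp
    _ ≤ _ := Finset.sum_le_sum (fun v _ => hw.2.2 v)
  have h2 : ∑ s : Finset V, w s * s.card ≤ (k : ℝ) * ∑ s : Finset V, w s := by
    rw [Finset.mul_sum]
    apply Finset.sum_le_sum
    intro s _
    rcases eq_or_ne (w s) 0 with h | h
    · simp [h]
    · rw [mul_comm (k:ℝ)]
      exact mul_le_mul_of_nonneg_left (by exact_mod_cast hcard s h) (hw.1 s)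
  rw [div_le_iff₀ (by exact_mod_cast hk1)]
  rw [mul_comm]
  linarith

lemma indep_le_indepNum {s : Finset V} (h : IsIndepF G s) : s.card ≤ indepNumF G :=
  le_csSup ⟨Fintype.card V, fun m hm => by obtain ⟨t, _, hc⟩ := hm; exact hc ▸ t.card_le_univ⟩
    ⟨s, h, rfl⟩

lemma clique_le_cliqueNum {s : Finset V} (h : IsCliqueF G s) : s.card ≤ cliqueNumF G :=
  le_csSup ⟨Fintype.card V, fun m hm => by obtain ⟨t, _, hc⟩ := hm; exact hc ▸ t.card_le_univ⟩
    ⟨s, h, rfl⟩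

lemma indepNum_mem : ∃ s : Finset V, IsIndepF G s ∧ s.card = indepNumF G := by
  have h : indepNumF G ∈ {n : ℕ | ∃ s : Finset V, IsIndepF G s ∧ s.card = n} :=
    Nat.sSup_mem ⟨0, ∅, fun u hu => absurd hu (Finset.notMem_empty u), Finset.card_empty⟩
      ⟨Fintype.card V, fun m hm => by obtain ⟨t, _, hc⟩ := hm; exact hc ▸ t.card_le_univ⟩
  exact h

lemma cliqueNum_mem : ∃ s : Finset V, IsCliqueF G s ∧ s.card = cliqueNumF G := by
  have h : cliqueNumF G ∈ {n : ℕ | ∃ s : Finset V, IsCliqueF G s ∧ s.card = n} :=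
    Nat.sSup_mem ⟨0, ∅, fun u hu => absurd hu (Finset.notMem_empty u), Finset.card_empty⟩
      ⟨Fintype.card V, fun m hm => by obtain ⟨t, _, hc⟩ := hm; exact hc ▸ t.card_le_univ⟩
  exact h


end Aux

/-- If `G` is a vertex-transitive graph on `n` vertices and
`k = max {α(G), ω(G)}`, then `Z_f(G) = n/k`. -/
theorem Zf_eq_card_div_max_of_vertexTransitive {V : Type*} [Fintype V] [DecidableEq V]
    (G : SimpleGraph V) (hvt : ∀ u v : V, ∃ e : G ≃g G, e u = v)
    (k : ℕ) (hk : k = max (indepNumF G) (cliqueNumF G)) :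
    Zf G = (Fintype.card V : ℝ) / (k : ℝ) := by
  have hnn : ∀ x ∈ {x | ∃ w, IsFracCocoloring G w ∧ x = ∑ s : Finset V, w s}, (0:ℝ) ≤ x := by
    rintro x ⟨w, hw, rfl⟩
    exact Finset.sum_nonneg fun s _ => hw.1 s
  rcases isEmpty_or_nonempty V with hV | hV
  · have h0 : (Fintype.card V : ℝ) = 0 := by simp
    rw [Zf, h0, zero_div]
    have mem0 : (0:ℝ) ∈ {x | ∃ w, IsFracCocoloring G w ∧ x = ∑ s : Finset V, w s} :=
      ⟨fun _ => 0, ⟨fun s => le_refl 0, fun s hs => absurd rfl hs,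
        fun v => (IsEmpty.false v).elim⟩, by simp⟩
    exact le_antisymm (csInf_le ⟨0, hnn⟩ mem0) (le_csInf ⟨0, mem0⟩ hnn)
  · obtain ⟨v₀⟩ := hV
    have hα1 : 1 ≤ indepNumF G := by
      have : IsIndepF G {v₀} := by
        intro u hu v hv
        simp only [Finset.mem_singleton] at hu hv
        subst hu; subst hv
        exact G.irrefl
      simpa using indep_le_indepNum (G := G) this
    have hk1 : 1 ≤ k := hk ▸ le_trans hα1 (le_max_left _ _)
    obtain ⟨S, hSP, hScard⟩ : ∃ S : Finset V, (IsCliqueF G S ∨ IsIndepF G S) ∧ S.card = k := by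
      rcases max_cases (indepNumF G) (cliqueNumF G) with ⟨h1, _⟩ | ⟨h1, _⟩
      · obtain ⟨S, hS, hc⟩ := indepNum_mem (G := G)
        exact ⟨S, Or.inr hS, by rw [hc, hk, h1]⟩
      · obtain ⟨S, hS, hc⟩ := cliqueNum_mem (G := G)
        exact ⟨S, Or.inl hS, by rw [hc, hk, h1]⟩
    have hSne : S.Nonempty := Finset.card_pos.mp (hScard ▸ hk1)
    obtain ⟨w, hw, htot⟩ := exists_good hvt S hSP hSne
    rw [hScard] at htot
    have memk : (Fintype.card V : ℝ)/(k:ℝ)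
        ∈ {x | ∃ w, IsFracCocoloring G w ∧ x = ∑ s : Finset V, w s} := ⟨w, hw, htot.symm⟩
    rw [Zf]
    refine le_antisymm (csInf_le ⟨0, hnn⟩ memk) (le_csInf ⟨_, memk⟩ ?_)
    rintro x ⟨w', hw', rfl⟩
    apply lower_bound w' hw' k hk1
    intro s hs
    rcases hw'.2.1 s hs with h | h
    · exact le_trans (clique_le_cliqueNum h) (hk ▸ le_max_right _ _)
    · exact le_trans (indep_le_indepNum h) (hk ▸ le_max_left _ _)
end

section
/- Let G be a finite triangle-free simple graph that is not of the form K_{1,t} together with zero or more isolated vertices for some t ≥ 1 (equivalently, G is not a graph whose edge set is nonempty and forms a single star component). Then χ_f(G) = Z_f(G). -/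
open Finset

/-- A fractional coloring: nonnegative weights on finsets, supported on independent sets,
covering every vertex with total weight at least 1. -/
def IsFracColoring {V : Type*} [Fintype V] [DecidableEq V] (G : SimpleGraph V)
    (w : Finset V → ℝ) : Prop :=
  (∀ s, 0 ≤ w s) ∧
  (∀ s, w s ≠ 0 → IsIndepF G s) ∧
  (∀ v : V, 1 ≤ ∑ s ∈ Finset.univ.filter (fun s : Finset V => v ∈ s), w s)

/-- The fractional chromatic number: the least total weight of a fractional coloring. -/
noncomputable def chif {V : Type*} [Fintype V] [DecidableEq V] (G : SimpleGraph V) : ℝ :=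
  sInf {x | ∃ w, IsFracColoring G w ∧ x = ∑ s : Finset V, w s}

open scoped Classical

set_option linter.unusedSectionVars false
set_option maxHeartbeats 1000000

namespace ChifZf

variable {V : Type*} [Fintype V] [DecidableEq V]

noncomputable def covW (w : Finset V → ℝ) (z : V) : ℝ :=
  ∑ s ∈ Finset.univ.filter (fun s : Finset V => z ∈ s), w s

noncomputable def Ew (G : SimpleGraph V) (w : Finset V → ℝ) : ℝ :=
  ∑ s ∈ Finset.univ.filter (fun s : Finset V => ¬ IsIndepF G s), w s

noncomputable def ind (z : V) (s : Finset V) : ℝ := if z ∈ s then 1 else 0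

variable {G : SimpleGraph V}

lemma ind_nonneg (z : V) (s : Finset V) : 0 ≤ ind z s := by
  unfold ind; split <;> norm_num

lemma ind_union_add_inter (z : V) (s t : Finset V) :
    ind z s + ind z t = ind z (s ∪ t) + ind z (s ∩ t) := by
  by_cases h1 : z ∈ s <;> by_cases h2 : z ∈ t <;>
    simp [ind, Finset.mem_union, Finset.mem_inter, h1, h2]

lemma ind_empty (z : V) : ind z (∅ : Finset V) = 0 := by simp [ind]

lemma ind_union_of_disjoint {s t : Finset V} (h : Disjoint s t) (z : V) :
    ind z (s ∪ t) = ind z s + ind z t := by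
  have h0 := ind_union_add_inter z s t
  rw [Finset.disjoint_iff_inter_eq_empty.mp h, ind_empty, add_zero] at h0
  exact h0.symm

lemma isIndepF_subset {s t : Finset V} (h : s ⊆ t) (ht : IsIndepF G t) : IsIndepF G s :=
  fun u hu v hv => ht u (h hu) v (h hv)

lemma isIndepF_insert {S : Finset V} (hS : IsIndepF G S) {a : V}
    (h : ∀ z ∈ S, ¬ G.Adj a z) : IsIndepF G (insert a S) := by
  intro u hu v hv
  rcases Finset.mem_insert.mp hu with rfl | hu' <;> rcases Finset.mem_insert.mp hv with rfl | hv'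
  · exact G.irrefl
  · exact h _ hv'
  · exact fun h' => h _ hu' h'.symm
  · exact hS _ hu' _ hv'

lemma notIndep_pair {a b : V} (h : G.Adj a b) : ¬ IsIndepF G {a, b} :=
  fun hI => hI a (by simp) b (by simp) h

lemma indep_pair {a b : V} (h : ¬ G.Adj a b) : IsIndepF G {a, b} := by
  intro u hu v hv
  simp only [Finset.mem_insert, Finset.mem_singleton] at hu hv
  rcases hu with rfl | rfl <;> rcases hv with rfl | rfl
  · exact G.irrefl
  · exact h
  · exact fun h' => h h'.symm
  · exact G.irrefl

lemma indep_singleton (a : V) : IsIndepF G {a} := by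
  intro u hu v hv
  simp only [Finset.mem_singleton] at hu hv
  subst hu; subst hv; exact G.irrefl

lemma no_tri (htf : ∀ s : Finset V, IsCliqueF G s → s.card ≤ 2) {a b c : V}
    (hab : G.Adj a b) (hac : G.Adj a c) (hbc : G.Adj b c) : False := by
  have hab' := G.ne_of_adj hab
  have hac' := G.ne_of_adj hac
  have hbc' := G.ne_of_adj hbc
  have hcl : IsCliqueF G ({a, b, c} : Finset V) := by
    intro u hu v hv huv
    simp only [Finset.mem_insert, Finset.mem_singleton] at hu hv
    rcases hu with rfl | rfl | rfl <;> rcases hv with rfl | rfl | rfl <;>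
      first
        | exact absurd rfl huv
        | assumption
        | exact hab.symm
        | exact hac.symm
        | exact hbc.symm
  have hcard : ({a, b, c} : Finset V).card = 3 := by
    rw [Finset.card_insert_of_notMem (by simp [hab', hac']),
      Finset.card_insert_of_notMem (by simp [hbc']), Finset.card_singleton]
  have := htf _ hcl
  omega

lemma suppEdge_eq (htf : ∀ s : Finset V, IsCliqueF G s → s.card ≤ 2)
    {w : Finset V → ℝ} (hw : IsFracCocoloring G w) {s : Finset V}
    (hs : ¬ IsIndepF G s) (hns : w s ≠ 0) :
    ∃ a b, G.Adj a b ∧ s = {a, b} := by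
  have hcl : IsCliqueF G s := (hw.2.1 s hns).resolve_right hs
  rw [IsIndepF] at hs; push_neg at hs
  obtain ⟨a, ha, b, hb, hab⟩ := hs
  refine ⟨a, b, hab, ?_⟩
  have hsub : ({a, b} : Finset V) ⊆ s := by
    intro z hz
    simp only [Finset.mem_insert, Finset.mem_singleton] at hz
    rcases hz with rfl | rfl <;> assumption
  have h2 : ({a, b} : Finset V).card = 2 := Finset.card_pair (G.ne_of_adj hab)
  exact (Finset.eq_of_subset_of_card_le hsub (by rw [h2]; exact htf s hcl)).symm

lemma hcov_aux (w : Finset V → ℝ) (δ : ℝ) (s₁ s₂ s₃ s₄ I : Finset V)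
    (h12 : s₁ ∩ s₂ = I) (h34 : Disjoint s₃ s₄) (huni : s₃ ∪ s₄ = s₁ ∪ s₂)
    (hsl : ∀ z ∈ I, 1 + δ ≤ covW w z) :
    ∀ z, ind z s₁ + ind z s₂ ≤ ind z s₃ + ind z s₄ ∨
      (ind z s₁ + ind z s₂ ≤ ind z s₃ + ind z s₄ + 1 ∧ 1 + δ ≤ covW w z) := by
  intro z
  have e1 : ind z s₁ + ind z s₂ = ind z s₃ + ind z s₄ + ind z I := by
    rw [ind_union_add_inter z s₁ s₂, h12, ← huni, ind_union_of_disjoint h34]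
  by_cases hz : z ∈ I
  · exact Or.inr ⟨by rw [e1]; simp [ind, hz], hsl z hz⟩
  · have h0 : ind z I = 0 := by simp [ind, hz]
    rw [e1, h0, add_zero]
    exact Or.inl le_rfl

lemma move {w : Finset V → ℝ} (hw : IsFracCocoloring G w)
    (s₁ s₂ s₃ s₄ : Finset V) (δ : ℝ) (hδ : 0 < δ)
    (h1 : ¬ IsIndepF G s₁) (h12 : s₁ ≠ s₂) (hw1 : δ ≤ w s₁) (hw2 : δ ≤ w s₂)
    (h3 : IsIndepF G s₃) (h4 : IsIndepF G s₄)
    (hcov : ∀ z, ind z s₁ + ind z s₂ ≤ ind z s₃ + ind z s₄ ∨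
      (ind z s₁ + ind z s₂ ≤ ind z s₃ + ind z s₄ + 1 ∧ 1 + δ ≤ covW w z)) :
    ∃ w', IsFracCocoloring G w' ∧ (∑ s : Finset V, w' s) = (∑ s : Finset V, w s) ∧
      Ew G w' ≤ Ew G w - δ := by
  set w' : Finset V → ℝ := fun s => w s + δ *
    ((if s = s₃ then 1 else 0) + (if s = s₄ then 1 else 0)
      - (if s = s₁ then 1 else 0) - (if s = s₂ then 1 else 0)) with hw'def
  have key : ∀ F : Finset (Finset V), ∑ s ∈ F, w' s = (∑ s ∈ F, w s) + δ *
      ((if s₃ ∈ F then 1 else 0) + (if s₄ ∈ F then 1 else 0)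
        - (if s₁ ∈ F then 1 else 0) - (if s₂ ∈ F then 1 else 0)) := by
    intro F
    have e3 : ∑ s ∈ F, (if s = s₃ then (1:ℝ) else 0) = (if s₃ ∈ F then (1:ℝ) else 0) :=
      Finset.sum_ite_eq' F s₃ (fun _ => (1:ℝ))
    have e4 : ∑ s ∈ F, (if s = s₄ then (1:ℝ) else 0) = (if s₄ ∈ F then (1:ℝ) else 0) :=
      Finset.sum_ite_eq' F s₄ (fun _ => (1:ℝ))
    have e1 : ∑ s ∈ F, (if s = s₁ then (1:ℝ) else 0) = (if s₁ ∈ F then (1:ℝ) else 0) :=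
      Finset.sum_ite_eq' F s₁ (fun _ => (1:ℝ))
    have e2 : ∑ s ∈ F, (if s = s₂ then (1:ℝ) else 0) = (if s₂ ∈ F then (1:ℝ) else 0) :=
      Finset.sum_ite_eq' F s₂ (fun _ => (1:ℝ))
    have einner : ∑ s ∈ F, ((if s = s₃ then (1:ℝ) else 0) + (if s = s₄ then 1 else 0)
        - (if s = s₁ then 1 else 0) - (if s = s₂ then 1 else 0))
        = (if s₃ ∈ F then (1:ℝ) else 0) + (if s₄ ∈ F then 1 else 0)
          - (if s₁ ∈ F then 1 else 0) - (if s₂ ∈ F then 1 else 0) := by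
      rw [Finset.sum_sub_distrib, Finset.sum_sub_distrib, Finset.sum_add_distrib,
        e3, e4, e1, e2]
    simp only [hw'def]
    rw [Finset.sum_add_distrib, ← Finset.mul_sum, einner]
  have hn13 : s₁ ≠ s₃ := fun h => h1 (h ▸ h3)
  have hn14 : s₁ ≠ s₄ := fun h => h1 (h ▸ h4)
  refine ⟨w', ⟨?_, ?_, ?_⟩, ?_, ?_⟩
  · -- nonneg
    intro s
    have i3 : (0:ℝ) ≤ (if s = s₃ then 1 else 0) := by split <;> norm_num
    have i4 : (0:ℝ) ≤ (if s = s₄ then 1 else 0) := by split <;> norm_num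
    by_cases e1 : s = s₁
    · subst e1
      simp only [hw'def, if_neg hn13, if_neg hn14, if_pos rfl, if_neg h12, if_true]
      linarith
    · by_cases e2 : s = s₂
      · subst e2
        simp only [hw'def, if_neg e1, if_pos rfl, if_true]
        nlinarith [mul_nonneg hδ.le (add_nonneg i3 i4)]
      · simp only [hw'def, if_neg e1, if_neg e2]
        nlinarith [hw.1 s, mul_nonneg hδ.le (add_nonneg i3 i4)]
  · -- support
    intro s hs
    by_cases e3 : s = s₃
    · exact Or.inr (e3 ▸ h3)
    by_cases e4 : s = s₄
    · exact Or.inr (e4 ▸ h4)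
    by_cases e1 : s = s₁
    · exact hw.2.1 s (by rw [e1]; exact ne_of_gt (lt_of_lt_of_le hδ hw1))
    by_cases e2 : s = s₂
    · exact hw.2.1 s (by rw [e2]; exact ne_of_gt (lt_of_lt_of_le hδ hw2))
    · apply hw.2.1 s
      simpa [hw'def, e1, e2, e3, e4] using hs
  · -- coverage
    intro v
    have hk := key (Finset.univ.filter (fun s : Finset V => v ∈ s))
    have m3 : ((if s₃ ∈ Finset.univ.filter (fun s : Finset V => v ∈ s) then (1:ℝ) else 0))
        = ind v s₃ := by simp [ind, Finset.mem_filter]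
    have m4 : ((if s₄ ∈ Finset.univ.filter (fun s : Finset V => v ∈ s) then (1:ℝ) else 0))
        = ind v s₄ := by simp [ind, Finset.mem_filter]
    have m1 : ((if s₁ ∈ Finset.univ.filter (fun s : Finset V => v ∈ s) then (1:ℝ) else 0))
        = ind v s₁ := by simp [ind, Finset.mem_filter]
    have m2 : ((if s₂ ∈ Finset.univ.filter (fun s : Finset V => v ∈ s) then (1:ℝ) else 0))
        = ind v s₂ := by simp [ind, Finset.mem_filter]
    rw [hk, m3, m4, m1, m2]
    have hold : (1:ℝ) ≤ ∑ s ∈ Finset.univ.filter (fun s : Finset V => v ∈ s), w s := hw.2.2 v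
    rcases hcov v with h | ⟨h, hslack⟩
    · nlinarith [mul_nonneg hδ.le (by linarith : (0:ℝ) ≤ ind v s₃ + ind v s₄ - ind v s₁ - ind v s₂)]
    · have hc : covW w v = ∑ s ∈ Finset.univ.filter (fun s : Finset V => v ∈ s), w s := rfl
      rw [hc] at hslack
      nlinarith [mul_le_mul_of_nonneg_left (by linarith :
        (-1:ℝ) ≤ ind v s₃ + ind v s₄ - ind v s₁ - ind v s₂) hδ.le]
  · -- total
    have hk := key Finset.univ
    simp only [Finset.mem_univ, if_true] at hk
    rw [hk]; ring
  · -- Ew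
    have F := Finset.univ.filter (fun s : Finset V => ¬ IsIndepF G s)
    have hk := key (Finset.univ.filter (fun s : Finset V => ¬ IsIndepF G s))
    have m3 : ((if s₃ ∈ Finset.univ.filter (fun s : Finset V => ¬ IsIndepF G s) then (1:ℝ) else 0)) = 0 := by
      simp [Finset.mem_filter, h3]
    have m4 : ((if s₄ ∈ Finset.univ.filter (fun s : Finset V => ¬ IsIndepF G s) then (1:ℝ) else 0)) = 0 := by
      simp [Finset.mem_filter, h4]
    have m1 : ((if s₁ ∈ Finset.univ.filter (fun s : Finset V => ¬ IsIndepF G s) then (1:ℝ) else 0)) = 1 := by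
      simp [Finset.mem_filter, h1]
    have m2 : (0:ℝ) ≤ (if s₂ ∈ Finset.univ.filter (fun s : Finset V => ¬ IsIndepF G s) then (1:ℝ) else 0) := by
      split <;> norm_num
    show (∑ s ∈ Finset.univ.filter (fun s : Finset V => ¬ IsIndepF G s), w' s)
      ≤ (∑ s ∈ Finset.univ.filter (fun s : Finset V => ¬ IsIndepF G s), w s) - δ
    rw [hk, m3, m4, m1]
    nlinarith [mul_nonneg hδ.le m2]


lemma moveM1 (htf : ∀ s : Finset V, IsCliqueF G s → s.card ≤ 2)
    {w : Finset V → ℝ} (hw : IsFracCocoloring G w) {a b c d : V}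
    (hab : G.Adj a b) (hcd : G.Adj c d)
    (hw1 : 0 < w {a, b}) (hw2 : 0 < w {c, d})
    (hdisj : Disjoint ({a, b} : Finset V) ({c, d} : Finset V)) :
    ∃ w', IsFracCocoloring G w' ∧ (∑ s : Finset V, w' s) = (∑ s : Finset V, w s) ∧
      Ew G w' < Ew G w := by
  have hamem : a ∈ ({a, b} : Finset V) := by simp
  have hbmem : b ∈ ({a, b} : Finset V) := by simp
  have hac : a ≠ c := fun h => Finset.disjoint_left.mp hdisj hamem (by simp [h])
  have had : a ≠ d := fun h => Finset.disjoint_left.mp hdisj hamem (by simp [h])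
  have hbc : b ≠ c := fun h => Finset.disjoint_left.mp hdisj hbmem (by simp [h])
  have hbd : b ≠ d := fun h => Finset.disjoint_left.mp hdisj hbmem (by simp [h])
  have hab' := G.ne_of_adj hab
  have hcd' := G.ne_of_adj hcd
  have hne : ({a, b} : Finset V) ≠ ({c, d} : Finset V) := by
    intro h
    exact Finset.disjoint_left.mp hdisj hamem (by rw [← h]; simp)
  have hδ : 0 < min (w {a, b}) (w {c, d}) := lt_min hw1 hw2
  have hinter : ({a, b} : Finset V) ∩ ({c, d} : Finset V) = ∅ :=
    Finset.disjoint_iff_inter_eq_empty.mp hdisj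
  have main : ∀ x y : V, ({x, y} : Finset V) = ({c, d} : Finset V) → x ≠ y →
      a ≠ y → b ≠ x → ¬ G.Adj a x → ¬ G.Adj b y →
      ∃ w', IsFracCocoloring G w' ∧ (∑ s : Finset V, w' s) = (∑ s : Finset V, w s) ∧
        Ew G w' < Ew G w := by
    intro x y hxy hxyne hay hbx hax hby
    have hax' : a ≠ x := by
      intro h
      exact Finset.disjoint_left.mp hdisj hamem (by rw [← hxy]; simp [h])
    have hby' : b ≠ y := by
      intro h
      exact Finset.disjoint_left.mp hdisj hbmem (by rw [← hxy]; simp [h])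
    have h34 : Disjoint ({a, x} : Finset V) ({b, y} : Finset V) := by
      rw [Finset.disjoint_left]
      intro z hz1 hz2
      simp only [Finset.mem_insert, Finset.mem_singleton] at hz1 hz2
      rcases hz1 with rfl | rfl <;> rcases hz2 with rfl | rfl
      · exact hab' rfl
      · exact hay rfl
      · exact hbx rfl
      · exact hxyne rfl
    have huni : ({a, x} : Finset V) ∪ ({b, y} : Finset V)
        = ({a, b} : Finset V) ∪ ({c, d} : Finset V) := by
      rw [← hxy]
      ext z
      simp only [Finset.mem_union, Finset.mem_insert, Finset.mem_singleton]
      tauto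
    obtain ⟨w', hw', hsum, hEle⟩ := move hw {a, b} {c, d} {a, x} {b, y}
      (min (w {a, b}) (w {c, d})) hδ (notIndep_pair hab) hne
      (min_le_left _ _) (min_le_right _ _) (indep_pair hax) (indep_pair hby)
      (hcov_aux w _ _ _ _ _ ∅ hinter h34 huni (by simp))
    exact ⟨w', hw', hsum, by linarith⟩
  by_cases h1 : ¬ G.Adj a c ∧ ¬ G.Adj b d
  · exact main c d rfl hcd' had hbc h1.1 h1.2
  · by_cases h2 : ¬ G.Adj a d ∧ ¬ G.Adj b c
    · exact main d c (Finset.pair_comm d c) (Ne.symm hcd') hac hbd h2.1 h2.2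
    · exfalso
      push_neg at h1 h2
      rcases Classical.em (G.Adj a c) with h1' | h1'
      · rcases Classical.em (G.Adj a d) with h2' | h2'
        · exact no_tri htf h1' h2' hcd
        · exact no_tri htf hab h1' (h2 h2')
      · have hbd' := h1 h1'
        rcases Classical.em (G.Adj a d) with h2' | h2'
        · exact no_tri htf hab h2' hbd'
        · exact no_tri htf (h2 h2') hbd' hcd


lemma key (htf : ∀ s : Finset V, IsCliqueF G s → s.card ≤ 2)
    (hstar : ¬ ∃ v : V, (∃ x y : V, G.Adj x y) ∧ ∀ x y : V, G.Adj x y → x = v ∨ y = v)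
    {w : Finset V → ℝ} (hw : IsFracCocoloring G w) (hE : 0 < Ew G w) :
    ∃ w', IsFracCocoloring G w' ∧ (∑ s : Finset V, w' s) = (∑ s : Finset V, w s) ∧
      Ew G w' < Ew G w := by
  -- a support edge exists
  obtain ⟨s₀, hs₀mem, hs₀ne⟩ := Finset.exists_ne_zero_of_sum_ne_zero (ne_of_gt hE)
  rw [Finset.mem_filter] at hs₀mem
  have hs₀bad : ¬ IsIndepF G s₀ := hs₀mem.2
  obtain ⟨a0, b0, hab0, hs₀eq⟩ := suppEdge_eq htf hw hs₀bad hs₀ne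
  have hw0pos : 0 < w ({a0, b0} : Finset V) := by
    rw [← hs₀eq]; exact lt_of_le_of_ne (hw.1 s₀) (Ne.symm hs₀ne)
  -- M1 : two disjoint support edges
  by_cases hM1 : ∃ a b c d : V, G.Adj a b ∧ G.Adj c d ∧ 0 < w {a, b} ∧ 0 < w {c, d} ∧
      Disjoint ({a, b} : Finset V) ({c, d} : Finset V)
  · obtain ⟨a, b, c, d, h1, h2, h3, h4, h5⟩ := hM1
    exact moveM1 htf hw h1 h2 h3 h4 h5
  push_neg at hM1
  -- a common vertex of all support edges
  have hcommon : ∃ u v₀ : V, G.Adj u v₀ ∧ 0 < w {u, v₀} ∧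
      (∀ s, ¬ IsIndepF G s → w s ≠ 0 → u ∈ s) := by
    by_cases hA : ∀ s, ¬ IsIndepF G s → w s ≠ 0 → a0 ∈ s
    · exact ⟨a0, b0, hab0, hw0pos, hA⟩
    · push_neg at hA
      obtain ⟨t, htbad, htne, hat⟩ := hA
      obtain ⟨p, q, hpq, hteq⟩ := suppEdge_eq htf hw htbad htne
      have htpos : 0 < w ({p, q} : Finset V) := by
        rw [← hteq]; exact lt_of_le_of_ne (hw.1 t) (Ne.symm htne)
      have hndisj := hM1 a0 b0 p q hab0 hpq hw0pos htpos
      rw [Finset.not_disjoint_iff] at hndisj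
      obtain ⟨z, hz1, hz2⟩ := hndisj
      have hb0t : b0 ∈ ({p, q} : Finset V) := by
        rcases Finset.mem_insert.mp hz1 with rfl | hz1'
        · exact absurd (by rw [hteq]; exact hz2) hat
        · rw [Finset.mem_singleton] at hz1'; subst hz1'; exact hz2
      obtain ⟨x, htx, hbx, hxa⟩ : ∃ x, ({p, q} : Finset V) = {b0, x} ∧ G.Adj b0 x ∧ x ≠ a0 := by
        rcases Finset.mem_insert.mp hb0t with h | hb0q
        · refine ⟨q, by rw [h], by rw [← h] at hpq; exact hpq, ?_⟩
          intro hqa; apply hat; rw [hteq, hqa]; simp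
        · rw [Finset.mem_singleton] at hb0q
          refine ⟨p, by rw [hb0q, Finset.pair_comm], by rw [← hb0q] at hpq; exact hpq.symm, ?_⟩
          intro hpa; apply hat; rw [hteq, hpa]; simp
      have hwbx : 0 < w ({b0, x} : Finset V) := by rw [← htx]; exact htpos
      refine ⟨b0, x, hbx, hwbx, ?_⟩
      intro s hsbad hsne
      by_contra hbs
      have hspos : 0 < w s := lt_of_le_of_ne (hw.1 s) (Ne.symm hsne)
      obtain ⟨p', q', hp'q', hseq⟩ := suppEdge_eq htf hw hsbad hsne
      have hspos' : 0 < w ({p', q'} : Finset V) := by rw [← hseq]; exact hspos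
      have ha0s : a0 ∈ s := by
        have hnd := hM1 a0 b0 p' q' hab0 hp'q' hw0pos hspos'
        rw [Finset.not_disjoint_iff] at hnd
        obtain ⟨z', hz1', hz2'⟩ := hnd
        rcases Finset.mem_insert.mp hz1' with rfl | hz1''
        · rw [hseq]; exact hz2'
        · rw [Finset.mem_singleton] at hz1''; subst hz1''
          exact absurd (by rw [hseq]; exact hz2') hbs
      have hxs : x ∈ s := by
        have hnd := hM1 b0 x p' q' hbx hp'q' hwbx hspos'
        rw [Finset.not_disjoint_iff] at hnd
        obtain ⟨z', hz1', hz2'⟩ := hnd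
        rcases Finset.mem_insert.mp hz1' with rfl | hz1''
        · exact absurd (by rw [hseq]; exact hz2') hbs
        · rw [Finset.mem_singleton] at hz1''; subst hz1''
          rw [hseq]; exact hz2'
      have hclq : IsCliqueF G s := (hw.2.1 s hsne).resolve_right hsbad
      have hax : G.Adj a0 x := hclq a0 ha0s x hxs (Ne.symm hxa)
      exact no_tri htf hab0 hax hbx
  obtain ⟨u, v₀, huv₀, hwv₀, hall⟩ := hcommon
  -- characterization of support edges
  have hchar : ∀ s, ¬ IsIndepF G s → w s ≠ 0 →
      ∃ v, s = {u, v} ∧ G.Adj u v ∧ 0 < w ({u, v} : Finset V) := by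
    intro s hsbad hsne
    obtain ⟨p, q, hpq, hseq⟩ := suppEdge_eq htf hw hsbad hsne
    have hus : u ∈ ({p, q} : Finset V) := by rw [← hseq]; exact hall s hsbad hsne
    have hpos : 0 < w s := lt_of_le_of_ne (hw.1 s) (Ne.symm hsne)
    rcases Finset.mem_insert.mp hus with h | husq
    · subst h
      exact ⟨q, hseq, hpq, by rw [← hseq]; exact hpos⟩
    · rw [Finset.mem_singleton] at husq; subst husq
      have hseq' : s = ({u, p} : Finset V) := by rw [hseq, Finset.pair_comm]
      exact ⟨p, hseq', hpq.symm, by rw [← hseq']; exact hpos⟩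
  -- a non-star edge avoiding u
  push_neg at hstar
  obtain ⟨x1, y1, hxy1, hx1u, hy1u⟩ := hstar u ⟨u, v₀, huv₀⟩
  obtain ⟨x, y, hxy, hxu, hyu, hyAdj⟩ :
      ∃ x y : V, G.Adj x y ∧ x ≠ u ∧ y ≠ u ∧ ¬ G.Adj u y := by
    by_cases h : G.Adj u y1
    · exact ⟨y1, x1, hxy1.symm, hy1u, hx1u, fun hc => no_tri htf hc h hxy1⟩
    · exact ⟨x1, y1, hxy1, hx1u, hy1u, h⟩
  -- M4
  by_cases hM4 : ∃ S v, IsIndepF G S ∧ w S ≠ 0 ∧ G.Adj u v ∧ 0 < w ({u, v} : Finset V) ∧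
      u ∉ S ∧ v ∉ S
  · obtain ⟨S, v, hS, hSne, huv, hwuv, huS, hvS⟩ := hM4
    have hSpos : 0 < w S := lt_of_le_of_ne (hw.1 S) (Ne.symm hSne)
    set S₁ := S.filter (fun z => ¬ G.Adj u z) with hS₁def
    set S₂ := S.filter (fun z => G.Adj u z) with hS₂def
    have hδ : 0 < min (w ({u, v} : Finset V)) (w S) := lt_min hwuv hSpos
    have h3 : IsIndepF G (insert u S₁) :=
      isIndepF_insert (isIndepF_subset (Finset.filter_subset _ S) hS)
        (fun z hz => (Finset.mem_filter.mp hz).2)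
    have h4 : IsIndepF G (insert v S₂) :=
      isIndepF_insert (isIndepF_subset (Finset.filter_subset _ S) hS)
        (fun z hz hadj => no_tri htf huv (Finset.mem_filter.mp hz).2 hadj)
    have h12a : ({u, v} : Finset V) ∩ S = ∅ := by
      ext z
      simp only [Finset.mem_inter, Finset.mem_insert, Finset.mem_singleton,
        Finset.notMem_empty, iff_false, not_and]
      rintro (rfl | rfl) <;> [exact huS; exact hvS]
    have h34d : Disjoint (insert u S₁) (insert v S₂) := by
      rw [Finset.disjoint_left]
      intro z hz1 hz2
      rcases Finset.mem_insert.mp hz1 with rfl | hz1' <;>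
        rcases Finset.mem_insert.mp hz2 with h | hz2'
      · exact G.ne_of_adj huv h
      · exact huS (Finset.filter_subset _ S hz2')
      · subst h; exact hvS (Finset.filter_subset _ S hz1')
      · exact (Finset.mem_filter.mp hz1').2 (Finset.mem_filter.mp hz2').2
    have huni : (insert u S₁) ∪ (insert v S₂) = ({u, v} : Finset V) ∪ S := by
      ext z
      simp only [Finset.mem_union, Finset.mem_insert, Finset.mem_singleton, hS₁def, hS₂def,
        Finset.mem_filter]
      tauto
    have h12 : ({u, v} : Finset V) ≠ S := fun h => notIndep_pair huv (by rw [h]; exact hS)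
    obtain ⟨w', hw', hsum, hEle⟩ := move hw {u, v} S (insert u S₁) (insert v S₂)
      (min (w ({u, v} : Finset V)) (w S)) hδ (notIndep_pair huv) h12
      (min_le_left _ _) (min_le_right _ _) h3 h4
      (hcov_aux w _ _ _ _ _ ∅ h12a h34d huni (by simp))
    exact ⟨w', hw', hsum, by linarith⟩
  -- M5
  by_cases hM5 : ∃ S v, IsIndepF G S ∧ w S ≠ 0 ∧ G.Adj u v ∧ 0 < w ({u, v} : Finset V) ∧
      u ∉ S ∧ v ∈ S ∧ 1 < covW w v
  · obtain ⟨S, v, hS, hSne, huv, hwuv, huS, hvS, hcv⟩ := hM5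
    have hSpos : 0 < w S := lt_of_le_of_ne (hw.1 S) (Ne.symm hSne)
    set S₁ := S.filter (fun z => ¬ G.Adj u z) with hS₁def
    set S₂ := S.filter (fun z => G.Adj u z) with hS₂def
    set δ := min (min (w ({u, v} : Finset V)) (w S)) (covW w v - 1) with hδdef
    have hδ : 0 < δ := lt_min (lt_min hwuv hSpos) (by linarith)
    have h3 : IsIndepF G (insert u S₁) :=
      isIndepF_insert (isIndepF_subset (Finset.filter_subset _ S) hS)
        (fun z hz => (Finset.mem_filter.mp hz).2)
    have h4 : IsIndepF G S₂ := isIndepF_subset (Finset.filter_subset _ S) hS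
    have h12a : ({u, v} : Finset V) ∩ S = {v} := by
      ext z
      simp only [Finset.mem_inter, Finset.mem_insert, Finset.mem_singleton]
      constructor
      · rintro ⟨rfl | rfl, hzS⟩
        · exact absurd hzS huS
        · rfl
      · rintro rfl; exact ⟨Or.inr rfl, hvS⟩
    have h34d : Disjoint (insert u S₁) S₂ := by
      rw [Finset.disjoint_left]
      intro z hz1 hz2
      rcases Finset.mem_insert.mp hz1 with rfl | hz1'
      · exact huS (Finset.filter_subset _ S hz2)
      · exact (Finset.mem_filter.mp hz1').2 (Finset.mem_filter.mp hz2).2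
    have huni : (insert u S₁) ∪ S₂ = ({u, v} : Finset V) ∪ S := by
      ext z
      have hv' : z = v → z ∈ S := fun h => h ▸ hvS
      simp only [Finset.mem_union, Finset.mem_insert, Finset.mem_singleton, hS₁def, hS₂def,
        Finset.mem_filter]
      tauto
    have hsl : ∀ z ∈ ({v} : Finset V), 1 + δ ≤ covW w z := by
      intro z hz
      rw [Finset.mem_singleton] at hz; subst hz
      have : δ ≤ covW w z - 1 := min_le_right _ _
      linarith
    have h12 : ({u, v} : Finset V) ≠ S := fun h => notIndep_pair huv (by rw [h]; exact hS)
    obtain ⟨w', hw', hsum, hEle⟩ := move hw {u, v} S (insert u S₁) S₂ δ hδ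
      (notIndep_pair huv) h12
      (le_trans (min_le_left _ _) (min_le_left _ _))
      (le_trans (min_le_left _ _) (min_le_right _ _)) h3 h4
      (hcov_aux w δ _ _ _ _ {v} h12a h34d huni hsl)
    exact ⟨w', hw', hsum, by linarith⟩
  -- M6
  by_cases hM6 : ∃ S, IsIndepF G S ∧ w S ≠ 0 ∧ u ∈ S ∧ 1 < covW w u
  · obtain ⟨S, hS, hSne, huS, hcu⟩ := hM6
    have hSpos : 0 < w S := lt_of_le_of_ne (hw.1 S) (Ne.symm hSne)
    have hv₀S : v₀ ∉ S := fun h => hS u huS v₀ h huv₀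
    set T₁ := (S.erase u).filter (fun z => ¬ G.Adj v₀ z) with hT₁def
    set T₂ := (S.erase u).filter (fun z => G.Adj v₀ z) with hT₂def
    set δ := min (min (w ({u, v₀} : Finset V)) (w S)) (covW w u - 1) with hδdef
    have hδ : 0 < δ := lt_min (lt_min hwv₀ hSpos) (by linarith)
    have hT₁S : T₁ ⊆ S := (Finset.filter_subset _ _).trans (Finset.erase_subset _ _)
    have hT₂S : T₂ ⊆ S := (Finset.filter_subset _ _).trans (Finset.erase_subset _ _)
    have h3 : IsIndepF G (insert v₀ T₁) :=
      isIndepF_insert (isIndepF_subset hT₁S hS) (fun z hz => (Finset.mem_filter.mp hz).2)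
    have h4 : IsIndepF G (insert u T₂) :=
      isIndepF_insert (isIndepF_subset hT₂S hS) (fun z hz => hS u huS z (hT₂S hz))
    have h12a : ({u, v₀} : Finset V) ∩ S = {u} := by
      ext z
      simp only [Finset.mem_inter, Finset.mem_insert, Finset.mem_singleton]
      constructor
      · rintro ⟨rfl | rfl, hzS⟩
        · rfl
        · exact absurd hzS hv₀S
      · rintro rfl; exact ⟨Or.inl rfl, huS⟩
    have huv₀' : u ≠ v₀ := G.ne_of_adj huv₀
    have h34d : Disjoint (insert v₀ T₁) (insert u T₂) := by
      rw [Finset.disjoint_left]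
      intro z hz1 hz2
      rcases Finset.mem_insert.mp hz1 with rfl | hz1' <;>
        rcases Finset.mem_insert.mp hz2 with h | hz2'
      · exact huv₀' h.symm
      · exact hv₀S (hT₂S hz2')
      · subst h; exact (Finset.mem_erase.mp (Finset.mem_filter.mp hz1').1).1 rfl
      · exact (Finset.mem_filter.mp hz1').2 (Finset.mem_filter.mp hz2').2
    have huni : (insert v₀ T₁) ∪ (insert u T₂) = ({u, v₀} : Finset V) ∪ S := by
      ext z
      have hu' : z = u → z ∈ S := fun h => h ▸ huS
      simp only [Finset.mem_union, Finset.mem_insert, Finset.mem_singleton, hT₁def, hT₂def,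
        Finset.mem_filter, Finset.mem_erase]
      tauto
    have hsl : ∀ z ∈ ({u} : Finset V), 1 + δ ≤ covW w z := by
      intro z hz
      rw [Finset.mem_singleton] at hz; subst hz
      have : δ ≤ covW w z - 1 := min_le_right _ _
      linarith
    have h12 : ({u, v₀} : Finset V) ≠ S := fun h => notIndep_pair huv₀ (by rw [h]; exact hS)
    obtain ⟨w', hw', hsum, hEle⟩ := move hw {u, v₀} S (insert v₀ T₁) (insert u T₂) δ hδ
      (notIndep_pair huv₀) h12
      (le_trans (min_le_left _ _) (min_le_left _ _))
      (le_trans (min_le_left _ _) (min_le_right _ _)) h3 h4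
      (hcov_aux w δ _ _ _ _ {u} h12a h34d huni hsl)
    exact ⟨w', hw', hsum, by linarith⟩
  -- endgame: contradiction
  exfalso
  push_neg at hM4 hM5 hM6
  set WA := ∑ s ∈ Finset.univ.filter (fun s : Finset V => IsIndepF G s ∧ u ∈ s), w s with hWAdef
  set WB := ∑ s ∈ Finset.univ.filter (fun s : Finset V => IsIndepF G s ∧ u ∉ s), w s with hWBdef
  have hWAnn : 0 ≤ WA := Finset.sum_nonneg fun s _ => hw.1 s
  have hWBnn : 0 ≤ WB := Finset.sum_nonneg fun s _ => hw.1 s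
  have hn1 : w ({u, v₀} : Finset V) + WA ≤ covW w u := by
    have hnm : ({u, v₀} : Finset V) ∉
        Finset.univ.filter (fun s : Finset V => IsIndepF G s ∧ u ∈ s) := by
      simp only [Finset.mem_filter, Finset.mem_univ, true_and, not_and]
      intro h; exact absurd h (notIndep_pair huv₀)
    have hsub : insert ({u, v₀} : Finset V)
        (Finset.univ.filter (fun s : Finset V => IsIndepF G s ∧ u ∈ s)) ⊆
        Finset.univ.filter (fun s : Finset V => u ∈ s) := by
      intro s hs
      rcases Finset.mem_insert.mp hs with rfl | hs'
      · simp
      · simp only [Finset.mem_filter] at hs' ⊢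
        exact ⟨Finset.mem_univ _, hs'.2.2⟩
    calc w ({u, v₀} : Finset V) + WA
        = ∑ s ∈ insert ({u, v₀} : Finset V)
            (Finset.univ.filter (fun s : Finset V => IsIndepF G s ∧ u ∈ s)), w s :=
          (Finset.sum_insert hnm).symm
      _ ≤ covW w u := Finset.sum_le_sum_of_subset_of_nonneg hsub (fun s _ _ => hw.1 s)
  have hBv : ∀ s ∈ Finset.univ.filter (fun s : Finset V => IsIndepF G s ∧ u ∉ s),
      w s ≠ 0 → v₀ ∈ s := by
    intro s hsmem hsne
    rw [Finset.mem_filter] at hsmem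
    exact hM4 s v₀ hsmem.2.1 hsne huv₀ hwv₀ hsmem.2.2
  have hn2 : w ({u, v₀} : Finset V) + WB ≤ covW w v₀ := by
    have hWB' : WB = ∑ s ∈ (Finset.univ.filter
        (fun s : Finset V => IsIndepF G s ∧ u ∉ s)).filter (fun s => v₀ ∈ s), w s :=
      (Finset.sum_filter_of_ne hBv).symm
    have hnm : ({u, v₀} : Finset V) ∉ (Finset.univ.filter
        (fun s : Finset V => IsIndepF G s ∧ u ∉ s)).filter (fun s => v₀ ∈ s) := by
      simp only [Finset.mem_filter, Finset.mem_univ, true_and, not_and]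
      intro h; exact absurd h.1 (notIndep_pair huv₀)
    have hsub : insert ({u, v₀} : Finset V) ((Finset.univ.filter
        (fun s : Finset V => IsIndepF G s ∧ u ∉ s)).filter (fun s => v₀ ∈ s)) ⊆
        Finset.univ.filter (fun s : Finset V => v₀ ∈ s) := by
      intro s hs
      rcases Finset.mem_insert.mp hs with rfl | hs'
      · simp
      · simp only [Finset.mem_filter] at hs' ⊢
        exact ⟨Finset.mem_univ _, hs'.2⟩
    calc w ({u, v₀} : Finset V) + WB
        = ∑ s ∈ insert ({u, v₀} : Finset V) ((Finset.univ.filter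
            (fun s : Finset V => IsIndepF G s ∧ u ∉ s)).filter (fun s => v₀ ∈ s)), w s := by
          rw [hWB']; exact (Finset.sum_insert hnm).symm
      _ ≤ covW w v₀ := Finset.sum_le_sum_of_subset_of_nonneg hsub (fun s _ _ => hw.1 s)
  have hn3 : 0 < WA → covW w u ≤ 1 := by
    intro h
    obtain ⟨s, hsm, hsne⟩ := Finset.exists_ne_zero_of_sum_ne_zero (ne_of_gt h)
    rw [Finset.mem_filter] at hsm
    exact hM6 s hsm.2.1 hsne hsm.2.2
  have hn4 : 0 < WB → covW w v₀ ≤ 1 := by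
    intro h
    obtain ⟨s, hsm, hsne⟩ := Finset.exists_ne_zero_of_sum_ne_zero (ne_of_gt h)
    rw [Finset.mem_filter] at hsm
    have hv₀s : v₀ ∈ s := hM4 s v₀ hsm.2.1 hsne huv₀ hwv₀ hsm.2.2
    exact hM5 s v₀ hsm.2.1 hsne huv₀ hwv₀ hsm.2.2 hv₀s
  by_cases hx : G.Adj u x ∧ w ({u, x} : Finset V) ≠ 0
  · -- branch A : x is a support-edge partner of u
    have hwux : 0 < w ({u, x} : Finset V) := lt_of_le_of_ne (hw.1 _) (Ne.symm hx.2)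
    have hally : ∀ s, w s ≠ 0 → y ∈ s → IsIndepF G s ∧ u ∈ s := by
      intro s hsne hys
      have hsind : IsIndepF G s := by
        by_contra hbad
        obtain ⟨v, hseq, hadj, _⟩ := hchar s hbad hsne
        rw [hseq] at hys
        rcases Finset.mem_insert.mp hys with h | hys'
        · exact hyu h
        · rw [Finset.mem_singleton] at hys'; subst hys'
          exact hyAdj hadj
      refine ⟨hsind, ?_⟩
      by_contra hus
      have hxs : x ∈ s := hM4 s x hsind hsne hx.1 hwux hus
      exact hsind x hxs y hys hxy
    have hcy : covW w y ≤ WA := by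
      have e0 : covW w y = ∑ s ∈ (Finset.univ.filter
          (fun s : Finset V => y ∈ s)).filter (fun s => IsIndepF G s ∧ u ∈ s), w s := by
        refine (Finset.sum_filter_of_ne ?_).symm
        intro s hsm hsne
        rw [Finset.mem_filter] at hsm
        exact hally s hsne hsm.2
      rw [e0]
      apply Finset.sum_le_sum_of_subset_of_nonneg
      · intro s hs
        simp only [Finset.mem_filter] at hs ⊢
        exact ⟨Finset.mem_univ _, hs.2⟩
      · exact fun s _ _ => hw.1 s
    have h1y : (1:ℝ) ≤ covW w y := hw.2.2 y
    have hWApos : 0 < WA := lt_of_lt_of_le zero_lt_one (le_trans h1y hcy)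
    have := hn3 hWApos
    linarith
  · -- branch B : neither x nor y lies on a support edge
    have hxnot : ∀ s, w s ≠ 0 → x ∈ s → IsIndepF G s := by
      intro s hsne hxs
      by_contra hbad
      obtain ⟨v, hseq, hadj, hpos⟩ := hchar s hbad hsne
      rw [hseq] at hxs
      rcases Finset.mem_insert.mp hxs with h | hxs'
      · exact hxu h
      · rw [Finset.mem_singleton] at hxs'; subst hxs'
        exact hx ⟨hadj, ne_of_gt hpos⟩
    have hynot : ∀ s, w s ≠ 0 → y ∈ s → IsIndepF G s := by
      intro s hsne hys
      by_contra hbad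
      obtain ⟨v, hseq, hadj, hpos⟩ := hchar s hbad hsne
      rw [hseq] at hys
      rcases Finset.mem_insert.mp hys with h | hys'
      · exact hyu h
      · rw [Finset.mem_singleton] at hys'; subst hys'
        exact hyAdj hadj
    have hsplit : ∀ z : V, (∀ s, w s ≠ 0 → z ∈ s → IsIndepF G s) →
        covW w z ≤ (∑ s ∈ (Finset.univ.filter
            (fun s : Finset V => IsIndepF G s ∧ u ∈ s)).filter (fun s => z ∈ s), w s)
          + (∑ s ∈ (Finset.univ.filter
            (fun s : Finset V => IsIndepF G s ∧ u ∉ s)).filter (fun s => z ∈ s), w s) := by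
      intro z hz
      have e0 : covW w z = ∑ s ∈ (Finset.univ.filter
          (fun s : Finset V => z ∈ s)).filter (fun s => IsIndepF G s), w s := by
        refine (Finset.sum_filter_of_ne ?_).symm
        intro s hsm hsne
        rw [Finset.mem_filter] at hsm
        exact hz s hsne hsm.2
      rw [e0]
      have e1 : (Finset.univ.filter (fun s : Finset V => z ∈ s)).filter
            (fun s => IsIndepF G s)
          = ((Finset.univ.filter (fun s : Finset V => z ∈ s)).filter
              (fun s => IsIndepF G s)).filter (fun s => u ∈ s)
            ∪ ((Finset.univ.filter (fun s : Finset V => z ∈ s)).filter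
              (fun s => IsIndepF G s)).filter (fun s => ¬ (u ∈ s)) :=
        (Finset.filter_union_filter_not_eq _ _).symm
      rw [e1, Finset.sum_union (Finset.disjoint_filter_filter_not _ _ _)]
      apply add_le_add
      · apply Finset.sum_le_sum_of_subset_of_nonneg
        · intro s hs
          simp only [Finset.mem_filter] at hs ⊢
          exact ⟨⟨Finset.mem_univ _, hs.1.2, hs.2⟩, hs.1.1.2⟩
        · exact fun s _ _ => hw.1 s
      · apply Finset.sum_le_sum_of_subset_of_nonneg
        · intro s hs
          simp only [Finset.mem_filter] at hs ⊢
          exact ⟨⟨Finset.mem_univ _, hs.1.2, hs.2⟩, hs.1.1.2⟩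
        · exact fun s _ _ => hw.1 s
    have hxcov := hsplit x hxnot
    have hycov := hsplit y hynot
    have hdisjA : Disjoint ((Finset.univ.filter
        (fun s : Finset V => IsIndepF G s ∧ u ∈ s)).filter (fun s => x ∈ s))
        ((Finset.univ.filter
        (fun s : Finset V => IsIndepF G s ∧ u ∈ s)).filter (fun s => y ∈ s)) := by
      rw [Finset.disjoint_left]
      intro s h1 h2
      simp only [Finset.mem_filter] at h1 h2
      exact h1.1.2.1 x h1.2 y h2.2 hxy
    have hdisjB : Disjoint ((Finset.univ.filter
        (fun s : Finset V => IsIndepF G s ∧ u ∉ s)).filter (fun s => x ∈ s))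
        ((Finset.univ.filter
        (fun s : Finset V => IsIndepF G s ∧ u ∉ s)).filter (fun s => y ∈ s)) := by
      rw [Finset.disjoint_left]
      intro s h1 h2
      simp only [Finset.mem_filter] at h1 h2
      exact h1.1.2.1 x h1.2 y h2.2 hxy
    have hQA : (∑ s ∈ (Finset.univ.filter
          (fun s : Finset V => IsIndepF G s ∧ u ∈ s)).filter (fun s => x ∈ s), w s)
        + (∑ s ∈ (Finset.univ.filter
          (fun s : Finset V => IsIndepF G s ∧ u ∈ s)).filter (fun s => y ∈ s), w s) ≤ WA := by
      rw [← Finset.sum_union hdisjA]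
      apply Finset.sum_le_sum_of_subset_of_nonneg
      · intro s hs
        rcases Finset.mem_union.mp hs with h | h <;> exact Finset.filter_subset _ _ h
      · exact fun s _ _ => hw.1 s
    have hQB : (∑ s ∈ (Finset.univ.filter
          (fun s : Finset V => IsIndepF G s ∧ u ∉ s)).filter (fun s => x ∈ s), w s)
        + (∑ s ∈ (Finset.univ.filter
          (fun s : Finset V => IsIndepF G s ∧ u ∉ s)).filter (fun s => y ∈ s), w s) ≤ WB := by
      rw [← Finset.sum_union hdisjB]
      apply Finset.sum_le_sum_of_subset_of_nonneg
      · intro s hs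
        rcases Finset.mem_union.mp hs with h | h <;> exact Finset.filter_subset _ _ h
      · exact fun s _ _ => hw.1 s
    have h1x : (1:ℝ) ≤ covW w x := hw.2.2 x
    have h1y : (1:ℝ) ≤ covW w y := hw.2.2 y
    have h2le : 2 ≤ WA + WB := by linarith
    rcases eq_or_lt_of_le hWAnn with hA0 | hApos
    · have hBpos : 0 < WB := by linarith
      have := hn4 hBpos
      linarith
    · have hcu := hn3 hApos
      have hBpos : 0 < WB := by linarith
      have := hn4 hBpos
      linarith


lemma exists_coloring_le (htf : ∀ s : Finset V, IsCliqueF G s → s.card ≤ 2)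
    (hstar : ¬ ∃ v : V, (∃ x y : V, G.Adj x y) ∧ ∀ x y : V, G.Adj x y → x = v ∨ y = v)
    {w : Finset V → ℝ} (hw : IsFracCocoloring G w) :
    ∃ w₂ : Finset V → ℝ, IsFracColoring G w₂ ∧
      (∑ s : Finset V, w₂ s) ≤ ∑ s : Finset V, w s := by
  set t := ∑ s : Finset V, w s with htdef
  set D : Set (Finset V → ℝ) := {w' | IsFracCocoloring G w' ∧ ∑ s : Finset V, w' s ≤ t}
    with hDdef
  have hne : D.Nonempty := ⟨w, hw, le_refl t⟩
  have hclosed : IsClosed D := by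
    have h1 : IsClosed {w' : Finset V → ℝ | ∀ s, 0 ≤ w' s} := by
      have e : {w' : Finset V → ℝ | ∀ s, 0 ≤ w' s}
          = ⋂ s, {w' : Finset V → ℝ | 0 ≤ w' s} := by
        ext w'; simp [Set.mem_iInter]
      rw [e]
      exact isClosed_iInter fun s => isClosed_le continuous_const (continuous_apply s)
    have h2 : IsClosed {w' : Finset V → ℝ |
        ∀ s, w' s ≠ 0 → IsCliqueF G s ∨ IsIndepF G s} := by
      have e : {w' : Finset V → ℝ | ∀ s, w' s ≠ 0 → IsCliqueF G s ∨ IsIndepF G s}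
          = ⋂ s, {w' : Finset V → ℝ | w' s ≠ 0 → IsCliqueF G s ∨ IsIndepF G s} := by
        ext w'; simp [Set.mem_iInter]
      rw [e]
      refine isClosed_iInter fun s => ?_
      by_cases hP : IsCliqueF G s ∨ IsIndepF G s
      · have e2 : {w' : Finset V → ℝ | w' s ≠ 0 → IsCliqueF G s ∨ IsIndepF G s}
            = Set.univ := by
          ext w'; simp [hP]
        rw [e2]; exact isClosed_univ
      · have e2 : {w' : Finset V → ℝ | w' s ≠ 0 → IsCliqueF G s ∨ IsIndepF G s}
            = {w' : Finset V → ℝ | w' s = 0} := by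
          ext w'
          simp only [Set.mem_setOf_eq]
          constructor
          · intro h; by_contra hne'; exact hP (h hne')
          · intro h hne'; exact absurd h hne'
        rw [e2]; exact isClosed_eq (continuous_apply s) continuous_const
    have h3 : IsClosed {w' : Finset V → ℝ |
        ∀ v : V, 1 ≤ ∑ s ∈ Finset.univ.filter (fun s : Finset V => v ∈ s), w' s} := by
      have e : {w' : Finset V → ℝ |
          ∀ v : V, 1 ≤ ∑ s ∈ Finset.univ.filter (fun s : Finset V => v ∈ s), w' s}
          = ⋂ v : V, {w' : Finset V → ℝ |
            1 ≤ ∑ s ∈ Finset.univ.filter (fun s : Finset V => v ∈ s), w' s} := by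
        ext w'; simp [Set.mem_iInter]
      rw [e]
      exact isClosed_iInter fun v => isClosed_le continuous_const
        (continuous_finset_sum _ fun s _ => continuous_apply s)
    have h4 : IsClosed {w' : Finset V → ℝ | ∑ s : Finset V, w' s ≤ t} :=
      isClosed_le (continuous_finset_sum _ fun s _ => continuous_apply s) continuous_const
    have hD : D = ({w' : Finset V → ℝ | ∀ s, 0 ≤ w' s}
        ∩ {w' : Finset V → ℝ | ∀ s, w' s ≠ 0 → IsCliqueF G s ∨ IsIndepF G s}
        ∩ {w' : Finset V → ℝ |
          ∀ v : V, 1 ≤ ∑ s ∈ Finset.univ.filter (fun s : Finset V => v ∈ s), w' s}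
        ∩ {w' : Finset V → ℝ | ∑ s : Finset V, w' s ≤ t}) := by
      ext w'
      simp only [hDdef, Set.mem_setOf_eq, Set.mem_inter_iff, IsFracCocoloring]
      tauto
    rw [hD]; exact ((h1.inter h2).inter h3).inter h4
  have hsub : D ⊆ Set.pi Set.univ (fun _ : Finset V => Set.Icc (0:ℝ) t) := by
    intro w' hw'
    rw [Set.mem_pi]
    intro s _
    exact ⟨hw'.1.1 s,
      le_trans (Finset.single_le_sum (fun i _ => hw'.1.1 i) (Finset.mem_univ s)) hw'.2⟩
  have hcomp : IsCompact D :=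
    IsCompact.of_isClosed_subset (isCompact_univ_pi fun _ => isCompact_Icc) hclosed hsub
  have hcont : ContinuousOn (fun w' : Finset V → ℝ => Ew G w') D :=
    (continuous_finset_sum _ fun s _ => continuous_apply s).continuousOn
  obtain ⟨m, hmD, hmin'⟩ := hcomp.exists_isMinOn hne hcont
  have hmin : ∀ y ∈ D, Ew G m ≤ Ew G y := fun y hy => hmin' hy
  have hEnn : 0 ≤ Ew G m := Finset.sum_nonneg fun s _ => hmD.1.1 s
  have hE0 : Ew G m = 0 := by
    rcases eq_or_lt_of_le hEnn with h | h
    · exact h.symm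
    · exfalso
      obtain ⟨w', hw', hsum, hlt⟩ := key htf hstar hmD.1 h
      have hmem : w' ∈ D := ⟨hw', by rw [hsum]; exact hmD.2⟩
      exact absurd (hmin w' hmem) (not_le.mpr hlt)
  refine ⟨m, ⟨hmD.1.1, ?_, hmD.1.2.2⟩, hmD.2⟩
  intro s hs
  by_contra hni
  apply hs
  exact (Finset.sum_eq_zero_iff_of_nonneg (fun i _ => hmD.1.1 i)).mp hE0 s
    (Finset.mem_filter.mpr ⟨Finset.mem_univ _, hni⟩)

lemma coloring_exists : ∃ w : Finset V → ℝ, IsFracColoring G w := by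
  set f : Finset V → ℝ := fun s => if ∃ a : V, s = {a} then 1 else 0 with hfdef
  have hf0 : ∀ s, 0 ≤ f s := by
    intro s
    by_cases h : ∃ a : V, s = {a} <;> simp [hfdef, h]
  refine ⟨f, hf0, ?_, ?_⟩
  · intro s hs
    by_cases h : ∃ a : V, s = {a}
    · obtain ⟨a, rfl⟩ := h
      exact indep_singleton a
    · exact absurd (by simp [hfdef, h]) hs
  · intro v
    have h1 : ({v} : Finset V) ∈ Finset.univ.filter (fun s : Finset V => v ∈ s) := by simp
    have h2 : f {v} = 1 := by simp [hfdef]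
    calc (1:ℝ) = f {v} := h2.symm
      _ ≤ ∑ s ∈ Finset.univ.filter (fun s : Finset V => v ∈ s), f s :=
          Finset.single_le_sum (fun i _ => hf0 i) h1

theorem main (htf : ∀ s : Finset V, IsCliqueF G s → s.card ≤ 2)
    (hstar : ¬ ∃ v : V, (∃ x y : V, G.Adj x y) ∧ ∀ x y : V, G.Adj x y → x = v ∨ y = v) :
    chif G = Zf G := by
  have hcocol : ∀ w : Finset V → ℝ, IsFracColoring G w → IsFracCocoloring G w :=
    fun w h => ⟨h.1, fun s hs => Or.inr (h.2.1 s hs), h.2.2⟩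
  have hCne : Set.Nonempty {x | ∃ w, IsFracColoring G w ∧ x = ∑ s : Finset V, w s} := by
    obtain ⟨w, hw⟩ := coloring_exists (G := G)
    exact ⟨_, w, hw, rfl⟩
  have hZne : Set.Nonempty {x | ∃ w, IsFracCocoloring G w ∧ x = ∑ s : Finset V, w s} := by
    obtain ⟨w, hw⟩ := coloring_exists (G := G)
    exact ⟨_, w, hcocol w hw, rfl⟩
  have hZbdd : BddBelow {x | ∃ w, IsFracCocoloring G w ∧ x = ∑ s : Finset V, w s} := by
    refine ⟨0, fun x hx => ?_⟩
    obtain ⟨w, hw, rfl⟩ := hx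
    exact Finset.sum_nonneg fun s _ => hw.1 s
  have hCbdd : BddBelow {x | ∃ w, IsFracColoring G w ∧ x = ∑ s : Finset V, w s} := by
    refine ⟨0, fun x hx => ?_⟩
    obtain ⟨w, hw, rfl⟩ := hx
    exact Finset.sum_nonneg fun s _ => hw.1 s
  apply le_antisymm
  · -- chif ≤ Zf
    apply le_of_forall_pos_le_add
    intro ε hε
    have hlt : Zf G < Zf G + ε := by linarith
    obtain ⟨xx, hxx, hxlt⟩ := exists_lt_of_csInf_lt hZne hlt
    obtain ⟨w, hw, rfl⟩ := hxx
    obtain ⟨w₂, hw₂, hle⟩ := exists_coloring_le htf hstar hw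
    have hc : chif G ≤ ∑ s : Finset V, w₂ s := csInf_le hCbdd ⟨w₂, hw₂, rfl⟩
    linarith
  · -- Zf ≤ chif
    apply csInf_le_csInf hZbdd hCne
    rintro xx ⟨w, hw, rfl⟩
    exact ⟨w, hcocol w hw, rfl⟩


end ChifZf

/-- If `G` is triangle-free and it is not the case that the edge set of `G`
is nonempty and forms a single star (all edges sharing a common vertex), then
`χ_f(G) = Z_f(G)`. -/
theorem chif_eq_Zf_of_triangleFree {V : Type*} [Fintype V] [DecidableEq V]
    (G : SimpleGraph V)
    (htf : ∀ s : Finset V, IsCliqueF G s → s.card ≤ 2)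
    (hstar : ¬ ∃ v : V, (∃ x y : V, G.Adj x y) ∧ ∀ x y : V, G.Adj x y → x = v ∨ y = v) :
    chif G = Zf G := by
  exact ChifZf.main htf hstar
end

section
/- For every finite triangle-free simple graph G, χ_f(G) ≤ Z_f(G) + 1. -/
open Finset

lemma indep_of_card_le_one {V : Type*} [DecidableEq V] {G : SimpleGraph V} {s : Finset V}
    (h : s.card ≤ 1) : IsIndepF G s := by
  intro u hu v hv hadj
  obtain rfl := Finset.card_le_one.mp h u hu v hv
  exact G.irrefl hadj

lemma exists_cover_classes {V : Type*} [Fintype V] [DecidableEq V] (G : SimpleGraph V)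
    (htf : ∀ s : Finset V, IsCliqueF G s → s.card ≤ 2) :
    ∀ (n : ℕ) (D : Finset V), D.card ≤ n →
    ∃ P : Finset (Finset V), (∀ s ∈ P, IsIndepF G s) ∧
      (∀ v ∈ D, ∃ s ∈ P, v ∈ s) ∧ ((P.card : ℝ) ≤ (D.card : ℝ) / 2 + 1) := by
  classical
  intro n
  induction n with
  | zero =>
    intro D hD
    refine ⟨∅, by simp, ?_, by simp; positivity⟩
    intro v hv
    rw [Finset.card_eq_zero.mp (Nat.le_zero.mp hD)] at hv
    exact absurd hv (Finset.notMem_empty v)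
  | succ n ih =>
    intro D hD
    by_cases hsmall : D.card ≤ n
    · exact ih D hsmall
    by_cases hD1 : D.card ≤ 1
    · refine ⟨{D}, ?_, fun v hv => ⟨D, Finset.mem_singleton_self _, hv⟩, ?_⟩
      · intro s hs
        rw [Finset.mem_singleton] at hs
        subst hs
        exact indep_of_card_le_one hD1
      · rw [Finset.card_singleton]
        have : (0:ℝ) ≤ (D.card : ℝ) := Nat.cast_nonneg _
        linarith
    push_neg at hD1
    by_cases hbig : ∃ u ∈ D, 2 ≤ (D.filter (fun x => G.Adj u x)).card
    · obtain ⟨u, hu, hN⟩ := hbig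
      set N := D.filter (fun x => G.Adj u x) with hNdef
      have hNsub : N ⊆ D := Finset.filter_subset _ _
      have hsd : (D \ N).card = D.card - N.card := Finset.card_sdiff_of_subset hNsub
      have hNle : N.card ≤ D.card := Finset.card_le_card hNsub
      have hcard' : (D \ N).card ≤ n := by omega
      obtain ⟨P', hP'i, hP'c, hP'b⟩ := ih (D \ N) hcard'
      refine ⟨insert N P', ?_, ?_, ?_⟩
      · intro s hs
        rcases Finset.mem_insert.mp hs with rfl | hs
        · intro x hx y hy hadj
          have hx' : G.Adj u x := (Finset.mem_filter.mp hx).2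
          have hy' : G.Adj u y := (Finset.mem_filter.mp hy).2
          have hxy : x ≠ y := G.ne_of_adj hadj
          have hux : u ≠ x := G.ne_of_adj hx'
          have huy : u ≠ y := G.ne_of_adj hy'
          have hclique : IsCliqueF G {u, x, y} := by
            intro a ha b hb hab
            simp only [Finset.mem_insert, Finset.mem_singleton] at ha hb
            rcases ha with rfl|rfl|rfl <;> rcases hb with rfl|rfl|rfl <;>
              first
                | exact absurd rfl hab
                | exact hx'
                | exact hx'.symm
                | exact hy'
                | exact hy'.symm
                | exact hadj
                | exact hadj.symm
          have h3 : ({u, x, y} : Finset V).card = 3 := by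
            rw [Finset.card_insert_of_notMem (by simp [hux, huy]),
              Finset.card_insert_of_notMem (by simp [hxy]), Finset.card_singleton]
          have := htf _ hclique
          omega
        · exact hP'i s hs
      · intro v hv
        by_cases hvN : v ∈ N
        · exact ⟨N, Finset.mem_insert_self _ _, hvN⟩
        · obtain ⟨s, hs, hvs⟩ := hP'c v (Finset.mem_sdiff.mpr ⟨hv, hvN⟩)
          exact ⟨s, Finset.mem_insert_of_mem hs, hvs⟩
      · have h1 : (insert N P').card ≤ P'.card + 1 := Finset.card_insert_le _ _
        have hdn : ((D \ N).card : ℝ) ≤ (D.card : ℝ) - 2 := by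
          rw [hsd]
          push_cast [Nat.cast_sub hNle]
          have : (2:ℝ) ≤ (N.card : ℝ) := by exact_mod_cast hN
          linarith
        have h1' : ((insert N P').card : ℝ) ≤ (P'.card : ℝ) + 1 := by exact_mod_cast h1
        linarith
    · push_neg at hbig
      set σ := Fintype.equivFin V with hσ
      set Bs := D.filter (fun v => ∃ u ∈ D, G.Adj u v ∧ σ u < σ v) with hBdef
      set As := D \ Bs with hAdef
      have hAi : IsIndepF G As := by
        intro x hx y hy hadj
        have hxD := (Finset.mem_sdiff.mp hx).1
        have hxB := (Finset.mem_sdiff.mp hx).2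
        have hyD := (Finset.mem_sdiff.mp hy).1
        have hyB := (Finset.mem_sdiff.mp hy).2
        rcases lt_trichotomy (σ x) (σ y) with h|h|h
        · exact hyB (Finset.mem_filter.mpr ⟨hyD, ⟨x, hxD, hadj, h⟩⟩)
        · exact G.ne_of_adj hadj (σ.injective h)
        · exact hxB (Finset.mem_filter.mpr ⟨hxD, ⟨y, hyD, hadj.symm, h⟩⟩)
      have hBkey : ∀ x ∈ Bs, ∀ y, y ∈ D → G.Adj x y → σ y < σ x := by
        intro x hx y hyD hadj
        have hmf := Finset.mem_filter.mp hx
        have hxD := hmf.1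
        obtain ⟨u, huD, hux, hσux⟩ := hmf.2
        by_cases huy : u = y
        · subst huy; exact hσux
        · exfalso
          have hcount := hbig x hxD
          have h2 : 2 ≤ (D.filter (fun z => G.Adj x z)).card := by
            have h1m : u ∈ D.filter (fun z => G.Adj x z) := Finset.mem_filter.mpr ⟨huD, hux.symm⟩
            have h2m : y ∈ D.filter (fun z => G.Adj x z) := Finset.mem_filter.mpr ⟨hyD, hadj⟩
            calc 2 = ({u, y} : Finset V).card := by
                  rw [Finset.card_insert_of_notMem (by simp [huy]), Finset.card_singleton]
              _ ≤ _ := Finset.card_le_card (by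
                  intro z hz
                  rcases Finset.mem_insert.mp hz with rfl | hz
                  · exact h1m
                  · rw [Finset.mem_singleton] at hz; subst hz; exact h2m)
          omega
      have hBi : IsIndepF G Bs := by
        intro x hx y hy hadj
        have h1 := hBkey x hx y (Finset.mem_of_mem_filter y hy) hadj
        have h2 := hBkey y hy x (Finset.mem_of_mem_filter x hx) hadj.symm
        exact absurd h1 (not_lt.mpr h2.le)
      refine ⟨{As, Bs}, ?_, ?_, ?_⟩
      · intro s hs
        rcases Finset.mem_insert.mp hs with rfl | hs
        · exact hAi
        · rw [Finset.mem_singleton] at hs; subst hs; exact hBi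
      · intro v hv
        by_cases hvB : v ∈ Bs
        · exact ⟨Bs, by simp, hvB⟩
        · exact ⟨As, by simp, Finset.mem_sdiff.mpr ⟨hv, hvB⟩⟩
      · have h1 : ({As, Bs} : Finset (Finset V)).card ≤ 2 := by
          apply le_trans (Finset.card_insert_le _ _)
          rw [Finset.card_singleton]
        have h1' : (({As, Bs} : Finset (Finset V)).card : ℝ) ≤ 2 := by exact_mod_cast h1
        have h2 : (2:ℝ) ≤ (D.card : ℝ) := by exact_mod_cast hD1
        linarith

lemma exists_frac_cover {V : Type*} [Fintype V] [DecidableEq V] (G : SimpleGraph V)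
    (htf : ∀ s : Finset V, IsCliqueF G s → s.card ≤ 2) :
    ∀ (n : ℕ) (S : Finset V) (ρ : V → ℝ) (B : ℝ),
      S.card ≤ n → (∀ v, v ∉ S → ρ v = 0) → (∀ v, 0 ≤ ρ v) → (∀ v, ρ v ≤ B) → 0 ≤ B →
      ∃ w' : Finset V → ℝ, (∀ s, 0 ≤ w' s) ∧ (∀ s, w' s ≠ 0 → IsIndepF G s) ∧
        (∀ v : V, ρ v ≤ ∑ s ∈ Finset.univ.filter (fun s : Finset V => v ∈ s), w' s) ∧
        (∑ s : Finset V, w' s) ≤ (∑ v : V, ρ v) / 2 + B := by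
  classical
  intro n
  induction n with
  | zero =>
    intro S ρ B hS hsupp hpos hle hB
    have hSe : S = ∅ := Finset.card_eq_zero.mp (Nat.le_zero.mp hS)
    have hall : ∀ v, ρ v = 0 := fun v => hsupp v (by simp [hSe])
    refine ⟨fun _ => 0, fun _ => le_refl 0, fun s h => absurd rfl h, ?_, ?_⟩
    · intro v; rw [hall v]; simp
    · simp [hall]; positivity
  | succ n ih =>
    intro S ρ B hS hsupp hpos hle hB
    by_cases hz : ∀ v, ρ v = 0
    · refine ⟨fun _ => 0, fun _ => le_refl 0, fun s h => absurd rfl h, ?_, ?_⟩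
      · intro v; rw [hz v]; simp
      · simp [hz]; positivity
    · push_neg at hz
      obtain ⟨v₀, hv₀⟩ := hz
      set D := S.filter (fun v => ρ v ≠ 0) with hDdef
      have hv₀S : v₀ ∈ S := by by_contra h; exact hv₀ (hsupp v₀ h)
      have hDne : D.Nonempty := ⟨v₀, Finset.mem_filter.mpr ⟨hv₀S, hv₀⟩⟩
      obtain ⟨u₀, hu₀D, hmin⟩ := Finset.exists_min_image D ρ hDne
      set τ := ρ u₀ with hτdef
      have hτpos : 0 < τ := lt_of_le_of_ne (hpos u₀) (Ne.symm (Finset.mem_filter.mp hu₀D).2)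
      obtain ⟨P, hPi, hPc, hPb⟩ := exists_cover_classes G htf D.card D le_rfl
      set ρ' : V → ℝ := fun v => max (ρ v - τ) 0 with hρ'def
      have hρ'supp : ∀ v, v ∉ D.erase u₀ → ρ' v = 0 := by
        intro v hv
        simp only [hρ'def]
        rw [max_eq_right]
        by_cases hvD : v ∈ D
        · have hvu : v = u₀ := by
            by_contra hne
            exact hv (Finset.mem_erase.mpr ⟨hne, hvD⟩)
          subst hvu; linarith
        · have hρv : ρ v = 0 := by
            by_cases hvS : v ∈ S
            · by_contra h; exact hvD (Finset.mem_filter.mpr ⟨hvS, h⟩)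
            · exact hsupp v hvS
          linarith
      have hcard : (D.erase u₀).card ≤ n := by
        have h1 := Finset.card_erase_of_mem hu₀D
        have h2 : D.card ≤ S.card := Finset.card_le_card (Finset.filter_subset _ _)
        have h3 : 1 ≤ D.card := Finset.card_pos.mpr hDne
        omega
      have hτB : τ ≤ B := hle u₀
      obtain ⟨w₂, hw₂pos, hw₂i, hw₂cov, hw₂tot⟩ := ih (D.erase u₀) ρ' (B - τ)
        hcard hρ'supp (fun v => le_max_right _ _)
        (fun v => max_le (by linarith [hle v]) (by linarith)) (by linarith)
      set w₁ : Finset V → ℝ := fun s => if s ∈ P then τ else 0 with hw₁def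
      have hw₁pos : ∀ s, 0 ≤ w₁ s := by
        intro s; simp only [hw₁def]; split
        · exact hτpos.le
        · exact le_refl 0
      refine ⟨fun s => w₁ s + w₂ s, ?_, ?_, ?_, ?_⟩
      · intro s; exact add_nonneg (hw₁pos s) (hw₂pos s)
      · intro s hs
        by_cases h1 : w₁ s = 0
        · refine hw₂i s ?_
          intro h2; exact hs (by simp only []; rw [h1, h2, add_zero])
        · have hsP : s ∈ P := by
            by_contra h
            exact h1 (by simp [hw₁def, h])
          exact hPi s hsP
      · intro v
        by_cases hvD : v ∈ D
        · obtain ⟨s₀, hs₀P, hvs₀⟩ := hPc v hvD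
          have hcov1 : τ ≤ ∑ s ∈ Finset.univ.filter (fun s : Finset V => v ∈ s), w₁ s := by
            have hmem : s₀ ∈ Finset.univ.filter (fun s : Finset V => v ∈ s) :=
              Finset.mem_filter.mpr ⟨Finset.mem_univ _, hvs₀⟩
            have := Finset.single_le_sum (f := w₁) (fun s _ => hw₁pos s) hmem
            have hval : w₁ s₀ = τ := by simp [hw₁def, hs₀P]
            linarith
          have hcov2 := hw₂cov v
          have hmaxv : ρ v - τ ≤ ρ' v := le_max_left _ _
          rw [Finset.sum_add_distrib]
          linarith
        · have hρv : ρ v = 0 := by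
            by_cases hvS : v ∈ S
            · by_contra h; exact hvD (Finset.mem_filter.mpr ⟨hvS, h⟩)
            · exact hsupp v hvS
          rw [hρv]
          exact Finset.sum_nonneg fun s _ => add_nonneg (hw₁pos s) (hw₂pos s)
      · have hsum1 : ∑ s : Finset V, w₁ s = τ * P.card := by
          simp only [hw₁def]
          rw [Finset.sum_ite_mem, Finset.univ_inter, Finset.sum_const, nsmul_eq_mul, mul_comm]
        have hptwise : ∀ v : V, ρ v - ρ' v = if v ∈ D then τ else 0 := by
          intro v
          by_cases hvD : v ∈ D
          · have h1 : τ ≤ ρ v := hmin v hvD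
            simp only [hρ'def, hvD, if_true]
            rw [max_eq_left (by linarith)]
            ring
          · have hρv : ρ v = 0 := by
              by_cases hvS : v ∈ S
              · by_contra h; exact hvD (Finset.mem_filter.mpr ⟨hvS, h⟩)
              · exact hsupp v hvS
            simp only [hρ'def, hvD, if_false, hρv]
            rw [max_eq_right (by linarith)]
            ring
        have hsum' : ∑ v : V, ρ' v = (∑ v : V, ρ v) - τ * D.card := by
          have h2 : ∑ v : V, (ρ v - ρ' v) = τ * D.card := by
            rw [Finset.sum_congr rfl (fun v _ => hptwise v), Finset.sum_ite_mem,
              Finset.univ_inter, Finset.sum_const, nsmul_eq_mul, mul_comm]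
          rw [Finset.sum_sub_distrib] at h2
          linarith
        have hPb' : τ * (P.card : ℝ) ≤ τ * ((D.card : ℝ) / 2 + 1) :=
          mul_le_mul_of_nonneg_left hPb hτpos.le
        have hPb'' : τ * (P.card : ℝ) ≤ τ * (D.card : ℝ) / 2 + τ := by
          have : τ * ((D.card : ℝ) / 2 + 1) = τ * (D.card : ℝ) / 2 + τ := by ring
          linarith
        rw [Finset.sum_add_distrib, hsum1]
        rw [hsum'] at hw₂tot
        linarith

/-- For every finite triangle-free simple graph `G`, `χ_f(G) ≤ Z_f(G) + 1`. -/
theorem chif_le_Zf_add_one_of_triangleFree {V : Type*} [Fintype V] [DecidableEq V]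
    (G : SimpleGraph V)
    (htf : ∀ s : Finset V, IsCliqueF G s → s.card ≤ 2) :
    chif G ≤ Zf G + 1 := by
  classical
  have key : ∀ w : Finset V → ℝ, IsFracCocoloring G w →
      chif G ≤ (∑ s : Finset V, w s) + 1 := by
    intro w hw
    obtain ⟨hw0, hwsupp, hwcov⟩ := hw
    set wI : Finset V → ℝ := fun s => if IsIndepF G s then w s else 0 with hwIdef
    set wK : Finset V → ℝ := fun s => if IsIndepF G s then 0 else w s with hwKdef
    have hsplit : ∀ s, w s = wI s + wK s := by
      intro s
      by_cases h : IsIndepF G s <;> simp [hwIdef, hwKdef, h]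
    have hwI0 : ∀ s, 0 ≤ wI s := by
      intro s; by_cases h : IsIndepF G s <;> simp [hwIdef, h, hw0 s]
    have hwK0 : ∀ s, 0 ≤ wK s := by
      intro s; by_cases h : IsIndepF G s <;> simp [hwKdef, h, hw0 s]
    have hwIind : ∀ s, wI s ≠ 0 → IsIndepF G s := by
      intro s hs
      by_cases h : IsIndepF G s
      · exact h
      · exact absurd (by simp [hwIdef, h]) hs
    have hK2 : ∀ s, wK s ≠ 0 → s.card = 2 := by
      intro s hs
      have hni : ¬ IsIndepF G s := by
        intro h; exact hs (by simp [hwKdef, h])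
      have hws : w s ≠ 0 := by
        intro h
        apply hs
        by_cases hi : IsIndepF G s <;> simp [hwKdef, hi, h]
      have hcl : IsCliqueF G s := (hwsupp s hws).resolve_right hni
      have h2 := htf s hcl
      have h1 : ¬ s.card ≤ 1 := fun h => hni (indep_of_card_le_one h)
      omega
    set iC : V → ℝ := fun v => ∑ s ∈ Finset.univ.filter (fun s : Finset V => v ∈ s), wI s
      with hiCdef
    set kC : V → ℝ := fun v => ∑ s ∈ Finset.univ.filter (fun s : Finset V => v ∈ s), wK s
      with hkCdef
    have hiC0 : ∀ v, 0 ≤ iC v := fun v => Finset.sum_nonneg fun s _ => hwI0 s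
    have hkC0 : ∀ v, 0 ≤ kC v := fun v => Finset.sum_nonneg fun s _ => hwK0 s
    have hcov' : ∀ v, 1 ≤ iC v + kC v := by
      intro v
      have h1 := hwcov v
      have h2 : ∑ s ∈ Finset.univ.filter (fun s : Finset V => v ∈ s), w s = iC v + kC v := by
        rw [hiCdef, hkCdef]
        simp only []
        rw [← Finset.sum_add_distrib]
        exact Finset.sum_congr rfl fun s _ => hsplit s
      linarith
    set ρ : V → ℝ := fun v => max (1 - iC v) 0 with hρdef
    have hρ0 : ∀ v, 0 ≤ ρ v := fun v => le_max_right _ _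
    have hρ1 : ∀ v, ρ v ≤ 1 := fun v => max_le (by linarith [hiC0 v]) zero_le_one
    have hρk : ∀ v, ρ v ≤ kC v := fun v => max_le (by linarith [hcov' v]) (hkC0 v)
    obtain ⟨w₂, hw₂0, hw₂i, hw₂cov, hw₂tot⟩ := exists_frac_cover G htf (Fintype.card V)
      Finset.univ ρ 1 (le_of_eq Finset.card_univ) (fun v hv => absurd (Finset.mem_univ v) hv)
      hρ0 hρ1 zero_le_one
    have hdouble : ∑ v : V, kC v = 2 * ∑ s : Finset V, wK s := by
      rw [hkCdef]
      simp only []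
      calc ∑ v : V, ∑ s ∈ Finset.univ.filter (fun s : Finset V => v ∈ s), wK s
          = ∑ v : V, ∑ s : Finset V, if v ∈ s then wK s else 0 := by
            exact Finset.sum_congr rfl fun v _ => by rw [Finset.sum_filter]
        _ = ∑ s : Finset V, ∑ v : V, if v ∈ s then wK s else 0 := Finset.sum_comm
        _ = ∑ s : Finset V, (s.card : ℝ) * wK s := by
            refine Finset.sum_congr rfl fun s _ => ?_
            rw [Finset.sum_ite_mem, Finset.univ_inter, Finset.sum_const, nsmul_eq_mul]
        _ = ∑ s : Finset V, 2 * wK s := by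
            refine Finset.sum_congr rfl fun s _ => ?_
            by_cases h : wK s = 0
            · rw [h]; ring
            · rw [hK2 s h]; norm_num
        _ = 2 * ∑ s : Finset V, wK s := by rw [← Finset.mul_sum]
    set wC : Finset V → ℝ := fun s => wI s + w₂ s with hwCdef
    have hmem : (∑ s : Finset V, wC s) ∈
        {x | ∃ w', IsFracColoring G w' ∧ x = ∑ s : Finset V, w' s} := by
      refine ⟨wC, ⟨fun s => add_nonneg (hwI0 s) (hw₂0 s), ?_, ?_⟩, rfl⟩
      · intro s hs
        by_cases h : wI s = 0
        · refine hw₂i s ?_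
          intro h2
          exact hs (by simp only [hwCdef]; rw [h, h2, add_zero])
        · exact hwIind s h
      · intro v
        have h1 := hw₂cov v
        have h2 : ∑ s ∈ Finset.univ.filter (fun s : Finset V => v ∈ s), wC s
            = iC v + ∑ s ∈ Finset.univ.filter (fun s : Finset V => v ∈ s), w₂ s := by
          rw [hwCdef, hiCdef]
          simp only []
          rw [← Finset.sum_add_distrib]
        have h3 : 1 - iC v ≤ ρ v := le_max_left _ _
        rw [h2]
        linarith
    have hbdd : BddBelow {x | ∃ w', IsFracColoring G w' ∧ x = ∑ s : Finset V, w' s} := by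
      refine ⟨0, ?_⟩
      rintro x ⟨w', hw', rfl⟩
      exact Finset.sum_nonneg fun s _ => hw'.1 s
    have hchif : chif G ≤ ∑ s : Finset V, wC s := csInf_le hbdd hmem
    have hSrho : ∑ v : V, ρ v ≤ 2 * ∑ s : Finset V, wK s := by
      rw [← hdouble]
      exact Finset.sum_le_sum fun v _ => hρk v
    have hsplitsum : ∑ s : Finset V, w s = (∑ s : Finset V, wI s) + ∑ s : Finset V, wK s := by
      rw [← Finset.sum_add_distrib]
      exact Finset.sum_congr rfl fun s _ => hsplit s
    have hwCsum : ∑ s : Finset V, wC s = (∑ s : Finset V, wI s) + ∑ s : Finset V, w₂ s := by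
      rw [hwCdef]
      simp only []
      rw [← Finset.sum_add_distrib]
    rw [hwCsum] at hchif
    linarith
  have hne : {x | ∃ w, IsFracCocoloring G w ∧ x = ∑ s : Finset V, w s}.Nonempty := by
    refine ⟨_, (fun s : Finset V => if s.card = 1 then (1:ℝ) else 0), ⟨?_, ?_, ?_⟩, rfl⟩
    · intro s
      simp only []
      split
      · exact zero_le_one
      · exact le_refl 0
    · intro s hs
      have h1 : s.card = 1 := by
        by_contra h; exact hs (by simp [h])
      exact Or.inr (indep_of_card_le_one (by omega))
    · intro v
      have h : ({v} : Finset V) ∈ Finset.univ.filter (fun s : Finset V => v ∈ s) := by simp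
      have h2 := Finset.single_le_sum
        (f := fun s : Finset V => if s.card = 1 then (1:ℝ) else 0)
        (fun s _ => by split <;> norm_num) h
      simpa using h2
  have hfin : chif G - 1 ≤ Zf G := by
    refine le_csInf hne ?_
    rintro b ⟨w, hw, rfl⟩
    linarith [key w hw]
  linarith
end

section
/- Let G be a finite simple graph and let Z be a fractional cocoloring of G of total weight W. Let V₁ be the set of vertices v such that the total Z-weight of the cliques containing v is at least 1/2. Then χ_f(G − V₁) ≤ 2W, where G − V₁ is the subgraph of G induced on V(G) \ V₁. -/
open Finset

/-- A fractional cocoloring given by separate weight functions `wc` on cliques and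
`wi` on independent sets, covering every vertex with total weight at least 1. -/
def IsFracCocoloring2 {V : Type*} [Fintype V] [DecidableEq V] (G : SimpleGraph V)
    (wc wi : Finset V → ℝ) : Prop :=
  (∀ s, 0 ≤ wc s) ∧ (∀ s, 0 ≤ wi s) ∧
  (∀ s, wc s ≠ 0 → IsCliqueF G s) ∧ (∀ s, wi s ≠ 0 → IsIndepF G s) ∧
  (∀ v : V, 1 ≤ ∑ s ∈ Finset.univ.filter (fun s : Finset V => v ∈ s), (wc s + wi s))

/-- If `Z = (wc, wi)` is a fractional cocoloring of `G` of total weight `W`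
and `V₁` is the set of vertices carrying clique weight at least `1/2`, then
`χ_f(G − V₁) ≤ 2W`. -/
theorem chif_remove_heavy_clique_vertices {V : Type*} [Fintype V] [DecidableEq V]
    (G : SimpleGraph V) (wc wi : Finset V → ℝ) (hZ : IsFracCocoloring2 G wc wi)
    (W : ℝ) (hW : W = (∑ s : Finset V, wc s) + ∑ s : Finset V, wi s)
    (V₁ : Finset V)
    (hV₁ : ∀ v : V, v ∈ V₁ ↔
      1 / 2 ≤ ∑ s ∈ Finset.univ.filter (fun s : Finset V => v ∈ s), wc s) :
    chif (SimpleGraph.induce {v : V | v ∉ V₁} G) ≤ 2 * W := by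
  classical
  obtain ⟨hc0, hi0, hcC, hiI, hcov⟩ := hZ
  set T : Set V := {v : V | v ∉ V₁} with hT
  let r : Finset V → Finset T := fun s => s.subtype (· ∈ T)
  have hmemr : ∀ (s : Finset V) (v : T), v ∈ r s ↔ (v : V) ∈ s := by
    intro s v
    simp [r, Finset.mem_subtype]
  let w : Finset T → ℝ := fun t =>
    2 * ∑ s ∈ Finset.univ.filter (fun s : Finset V => r s = t), wi s
  have key : ∀ v : V, v ∉ V₁ →
      (1/2 : ℝ) ≤ ∑ s ∈ Finset.univ.filter (fun s : Finset V => v ∈ s), wi s := by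
    intro v hv
    have h1 := hcov v
    rw [Finset.sum_add_distrib] at h1
    have h2 : ∑ s ∈ Finset.univ.filter (fun s : Finset V => v ∈ s), wc s < 1/2 := by
      by_contra h
      exact hv ((hV₁ v).mpr (le_of_not_gt h))
    linarith
  have hcol : IsFracColoring (SimpleGraph.induce T G) w := by
    refine ⟨fun t => ?_, fun t ht => ?_, fun v => ?_⟩
    · exact mul_nonneg (by norm_num) (Finset.sum_nonneg fun s _ => hi0 s)
    · have hne : ∑ s ∈ Finset.univ.filter (fun s : Finset V => r s = t), wi s ≠ 0 := by
        intro h0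
        exact ht (by simp [w, h0])
      obtain ⟨s, hs, hs0⟩ := Finset.exists_ne_zero_of_sum_ne_zero hne
      have hrs : r s = t := (Finset.mem_filter.mp hs).2
      have hind := hiI s hs0
      intro u hu v hv hadj
      have hu' : (u : V) ∈ s := (hmemr s u).mp (hrs ▸ hu)
      have hv' : (v : V) ∈ s := (hmemr s v).mp (hrs ▸ hv)
      exact hind _ hu' _ hv' hadj
    · have hmaps : ∀ s ∈ Finset.univ.filter (fun s : Finset V => v ∈ r s),
          r s ∈ Finset.univ.filter (fun t : Finset T => v ∈ t) := by
        intro s hs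
        simp only [Finset.mem_filter, Finset.mem_univ, true_and] at hs ⊢
        exact hs
      have hfib := Finset.sum_fiberwise_of_maps_to hmaps wi
      have hinner : ∀ t ∈ Finset.univ.filter (fun t : Finset T => v ∈ t),
          ∑ s ∈ (Finset.univ.filter (fun s : Finset V => v ∈ r s)).filter
            (fun s => r s = t), wi s
          = w t / 2 := by
        intro t ht
        have hvt : v ∈ t := (Finset.mem_filter.mp ht).2
        have : (Finset.univ.filter (fun s : Finset V => v ∈ r s)).filter
            (fun s => r s = t) = Finset.univ.filter (fun s : Finset V => r s = t) := by
          ext s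
          simp only [Finset.mem_filter, Finset.mem_univ, true_and]
          constructor
          · rintro ⟨-, h⟩; exact h
          · intro h; exact ⟨h ▸ hvt, h⟩
        rw [this]; simp only [w]
        ring
      rw [Finset.sum_congr rfl hinner] at hfib
      have hbase : ∑ s ∈ Finset.univ.filter (fun s : Finset V => v ∈ r s), wi s
          = ∑ s ∈ Finset.univ.filter (fun s : Finset V => (v : V) ∈ s), wi s := by
        apply Finset.sum_congr _ (fun _ _ => rfl)
        ext s
        simp [hmemr]
      have hkey := key (v : V) v.2
      rw [hbase] at hfib
      have : (1 : ℝ) ≤ 2 * ∑ t ∈ Finset.univ.filter (fun t : Finset T => v ∈ t), w t / 2 := by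
        rw [hfib]; linarith
      calc (1 : ℝ) ≤ 2 * ∑ t ∈ Finset.univ.filter (fun t : Finset T => v ∈ t), w t / 2 := this
        _ = ∑ t ∈ Finset.univ.filter (fun t : Finset T => v ∈ t), w t := by
            rw [Finset.mul_sum]; apply Finset.sum_congr rfl; intros; ring
  have htot : ∑ t : Finset T, w t = 2 * ∑ s : Finset V, wi s := by
    have hmaps : ∀ s ∈ (Finset.univ : Finset (Finset V)),
        r s ∈ (Finset.univ : Finset (Finset T)) := fun _ _ => Finset.mem_univ _
    have hfib := Finset.sum_fiberwise_of_maps_to hmaps wi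
    calc ∑ t : Finset T, w t
        = 2 * ∑ t : Finset T, ∑ s ∈ Finset.univ.filter (fun s : Finset V => r s = t), wi s := by
          rw [Finset.mul_sum]
      _ = 2 * ∑ s : Finset V, wi s := by rw [hfib]
  have hmem : ∑ t : Finset T, w t ∈
      {x | ∃ w', IsFracColoring (SimpleGraph.induce T G) w' ∧ x = ∑ s : Finset T, w' s} :=
    ⟨w, hcol, rfl⟩
  have hbdd : BddBelow {x | ∃ w', IsFracColoring (SimpleGraph.induce T G) w' ∧
      x = ∑ s : Finset T, w' s} := by
    refine ⟨0, fun x hx => ?_⟩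
    obtain ⟨w', hw', rfl⟩ := hx
    exact Finset.sum_nonneg fun s _ => hw'.1 s
  have hle : chif (SimpleGraph.induce T G) ≤ ∑ t : Finset T, w t := csInf_le hbdd hmem
  have hwc : (0 : ℝ) ≤ ∑ s : Finset V, wc s := Finset.sum_nonneg fun s _ => hc0 s
  rw [htot] at hle
  calc chif (SimpleGraph.induce T G) ≤ 2 * ∑ s : Finset V, wi s := hle
    _ ≤ 2 * W := by rw [hW]; linarith
end

section
/- Let k ≥ 1 be an integer and let R be a positive integer such that every simple graph on R vertices contains a clique of size k or an independent set of size k (for instance R = R(k,k), the diagonal Ramsey number). Then every finite simple graph G with ω(G) < k satisfies χ_f(G) ≤ Z_f(G) + R. -/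
open Finset

lemma ramsey_indep_aux (k R : ℕ)
    (hRam : ∀ H : SimpleGraph (Fin R),
      (∃ s : Finset (Fin R), IsCliqueF H s ∧ s.card = k) ∨
      (∃ s : Finset (Fin R), IsIndepF H s ∧ s.card = k))
    {V : Type*} [Fintype V] [DecidableEq V] (G : SimpleGraph V)
    (hω : ∀ s : Finset V, IsCliqueF G s → s.card < k)
    (S : Finset V) (hS : R ≤ S.card) :
    ∃ I : Finset V, I ⊆ S ∧ IsIndepF G I ∧ I.card = k := by
  classical
  obtain ⟨T, hTS, hT⟩ := Finset.exists_subset_card_eq hS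
  let e : Fin R ≃ {x // x ∈ T} := (T.equivFinOfCardEq hT).symm
  let f : Fin R → V := fun i => (e i : V)
  have hf : Function.Injective f := fun i j h => e.injective (Subtype.ext h)
  have hfT : ∀ i, f i ∈ T := fun i => (e i).2
  let H : SimpleGraph (Fin R) := SimpleGraph.comap f G
  rcases hRam H with ⟨s, hs, hcard⟩ | ⟨s, hs, hcard⟩
  · exfalso
    have hclique : IsCliqueF G (s.image f) := by
      intro u hu v hv huv
      obtain ⟨i, hi, rfl⟩ := Finset.mem_image.mp hu
      obtain ⟨j, hj, rfl⟩ := Finset.mem_image.mp hv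
      have hij : i ≠ j := fun h => huv (by rw [h])
      exact hs i hi j hj hij
    have h2 := hω _ hclique
    rw [Finset.card_image_of_injective _ hf, hcard] at h2
    exact lt_irrefl _ h2
  · refine ⟨s.image f, ?_, ?_, ?_⟩
    · intro x hx
      obtain ⟨i, _, rfl⟩ := Finset.mem_image.mp hx
      exact hTS (hfT i)
    · intro u hu v hv hadj
      obtain ⟨i, hi, rfl⟩ := Finset.mem_image.mp hu
      obtain ⟨j, hj, rfl⟩ := Finset.mem_image.mp hv
      by_cases hij : i = j
      · subst hij; exact G.irrefl hadj
      · exact hs i hi j hj hadj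
    · rw [Finset.card_image_of_injective _ hf, hcard]

lemma cover_aux (k R : ℕ) (hk : 1 ≤ k) (hR : 0 < R)
    {V : Type*} [Fintype V] [DecidableEq V] (G : SimpleGraph V)
    (hext : ∀ S : Finset V, R ≤ S.card → ∃ I : Finset V, I ⊆ S ∧ IsIndepF G I ∧ I.card = k) :
    ∀ (n : ℕ) (d : V → ℝ), (Finset.univ.filter (fun v => d v ≠ 0)).card ≤ n →
      (∀ v, 0 ≤ d v) → (∀ v, d v ≤ 1) →
      ∃ w' : Finset V → ℝ, (∀ s, 0 ≤ w' s) ∧ (∀ s, w' s ≠ 0 → IsIndepF G s) ∧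
        (∀ v, d v ≤ ∑ s ∈ Finset.univ.filter (fun s : Finset V => v ∈ s), w' s) ∧
        ∑ s : Finset V, w' s ≤ (∑ v : V, d v) / k + ((R : ℝ) - 1) := by
  classical
  intro n
  induction n with
  | zero =>
    intro d hsupp hd0 hd1
    have hdz : ∀ v, d v = 0 := by
      intro v
      by_contra hv
      have : v ∈ Finset.univ.filter (fun v => d v ≠ 0) := by simp [hv]
      have := Finset.card_pos.mpr ⟨v, this⟩
      omega
    refine ⟨fun _ => 0, fun _ => le_refl 0, fun s hs => absurd rfl hs, fun v => by simp [hdz v], ?_⟩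
    have h1 : (0:ℝ) ≤ (∑ v : V, d v) / k := div_nonneg (Finset.sum_nonneg fun v _ => hd0 v) (Nat.cast_nonneg k)
    have h2 : (1:ℝ) ≤ R := by exact_mod_cast hR
    simp only [Finset.sum_const_zero]
    linarith
  | succ n ih =>
    intro d hsupp hd0 hd1
    set S := Finset.univ.filter (fun v => d v ≠ 0) with hS
    by_cases hbig : R ≤ S.card
    · -- extract independent set
      obtain ⟨I, hIS, hIindep, hIcard⟩ := hext S hbig
      have hIpos : 0 < I.card := by omega
      have hIne : I.Nonempty := Finset.card_pos.mp hIpos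
      obtain ⟨v0, hv0I, hv0min⟩ := I.exists_min_image d hIne
      set m := d v0 with hm
      have hm0 : 0 ≤ m := hd0 v0
      have hv0S : v0 ∈ S := hIS hv0I
      set d' : V → ℝ := fun v => if v ∈ I then d v - m else d v with hd'
      have hd'0 : ∀ v, 0 ≤ d' v := by
        intro v; simp only [hd']
        split
        · next h => linarith [hv0min v h]
        · exact hd0 v
      have hd'1 : ∀ v, d' v ≤ 1 := by
        intro v; simp only [hd']
        split
        · linarith [hd1 v]
        · exact hd1 v
      have hsub : Finset.univ.filter (fun v => d' v ≠ 0) ⊆ S.erase v0 := by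
        intro v hv
        simp only [Finset.mem_filter, Finset.mem_univ, true_and] at hv
        rw [Finset.mem_erase]
        constructor
        · rintro rfl
          simp only [hd', if_pos hv0I, hm, sub_self] at hv
          exact hv rfl
        · simp only [hS, Finset.mem_filter, Finset.mem_univ, true_and]
          intro hdv
          apply hv
          simp only [hd']
          split
          · next h => exact absurd hdv (by
              have : v ∈ S := hIS h
              simp only [hS, Finset.mem_filter, Finset.mem_univ, true_and] at this
              exact this)
          · exact hdv
      have hcard' : (Finset.univ.filter (fun v => d' v ≠ 0)).card ≤ n := by
        have h1 := Finset.card_le_card hsub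
        rw [Finset.card_erase_of_mem hv0S] at h1
        omega
      obtain ⟨w'', hw''0, hw''supp, hw''cov, hw''tot⟩ := ih d' hcard' hd'0 hd'1
      refine ⟨fun s => w'' s + (if s = I then m else 0), ?_, ?_, ?_, ?_⟩
      · intro s; have := hw''0 s; simp only []; split <;> linarith
      · intro s hs
        by_cases hsI : s = I
        · subst hsI; exact hIindep
        · apply hw''supp
          simpa [hsI] using hs
      · intro v
        rw [Finset.sum_add_distrib, Finset.sum_ite_eq' _ I (fun _ => m)]
        have hcov := hw''cov v
        have hIm : (I ∈ Finset.univ.filter (fun s : Finset V => v ∈ s)) ↔ v ∈ I := by simp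
        by_cases hvI : v ∈ I
        · rw [if_pos (hIm.mpr hvI)]
          have : d' v = d v - m := by simp [hd', hvI]
          linarith [hcov, this ▸ hcov]
        · rw [if_neg (fun h => hvI (hIm.mp h))]
          have : d' v = d v := by simp [hd', hvI]
          linarith [this ▸ hcov]
      · rw [Finset.sum_add_distrib, Finset.sum_ite_eq' _ I (fun _ => m), if_pos (Finset.mem_univ I)]
        have hsum : ∑ v : V, d' v = (∑ v : V, d v) - k * m := by
          have : ∀ v, d' v = d v - (if v ∈ I then m else 0) := by
            intro v; simp only [hd']; split <;> simp
          simp_rw [this, Finset.sum_sub_distrib, Finset.sum_ite_mem, Finset.univ_inter,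
            Finset.sum_const, nsmul_eq_mul, hIcard]
        have hk0 : (0:ℝ) < k := by exact_mod_cast hk
        have : (∑ v : V, d' v) / k = (∑ v : V, d v) / k - m := by
          rw [hsum]; field_simp
        linarith [hw''tot, this ▸ hw''tot]
    · -- small support: singletons
      push_neg at hbig
      refine ⟨fun s => ∑ u ∈ S, if s = {u} then d u else 0, ?_, ?_, ?_, ?_⟩
      · intro s
        apply Finset.sum_nonneg
        intro u _; split
        · exact hd0 u
        · exact le_refl 0
      · intro s hs
        have : ∃ u ∈ S, s = {u} := by
          by_contra hno
          push_neg at hno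
          apply hs
          apply Finset.sum_eq_zero
          intro u hu
          rw [if_neg (hno u hu)]
        obtain ⟨u, _, rfl⟩ := this
        intro a ha b hb
        simp only [Finset.mem_singleton] at ha hb
        subst ha; subst hb
        exact G.irrefl
      · intro v
        by_cases hvS : v ∈ S
        · have hmem : ({v} : Finset V) ∈ Finset.univ.filter (fun s : Finset V => v ∈ s) := by simp
          have hval : (∑ u ∈ S, if ({v} : Finset V) = {u} then d u else 0) = d v := by
            have : ∀ u, (({v} : Finset V) = {u}) ↔ (u = v) :=
              fun u => ⟨fun h => (Finset.singleton_injective h).symm, fun h => by rw [h]⟩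
            simp_rw [this]
            rw [Finset.sum_ite_eq' S v d, if_pos hvS]
          calc d v = _ := hval.symm
            _ ≤ _ := Finset.single_le_sum (f := fun s => ∑ u ∈ S, if s = {u} then d u else 0)
                (fun s _ => Finset.sum_nonneg (fun u _ => by split; exacts [hd0 u, le_refl 0])) hmem
        · have : d v = 0 := by
            simp only [hS, Finset.mem_filter, Finset.mem_univ, true_and, not_not] at hvS
            exact hvS
          rw [this]
          apply Finset.sum_nonneg
          intro s _
          exact Finset.sum_nonneg (fun u _ => by split; exacts [hd0 u, le_refl 0])
      · rw [Finset.sum_comm]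
        have : ∀ u ∈ S, (∑ s : Finset V, if s = {u} then d u else 0) = d u := by
          intro u _
          rw [Finset.sum_ite_eq' _ ({u} : Finset V) (fun _ => d u), if_pos (Finset.mem_univ _)]
        rw [Finset.sum_congr rfl this]
        have h1 : ∑ u ∈ S, d u ≤ (S.card : ℝ) := by
          calc ∑ u ∈ S, d u ≤ ∑ u ∈ S, 1 := Finset.sum_le_sum (fun u _ => hd1 u)
            _ = (S.card : ℝ) := by simp
        have h2 : (S.card : ℝ) ≤ (R : ℝ) - 1 := by
          have : S.card + 1 ≤ R := hbig
          have := (Nat.cast_le (α := ℝ)).mpr this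
          push_cast at this
          linarith
        have h3 : (0:ℝ) ≤ 0 := le_refl 0
        have h4 : (0:ℝ) ≤ (∑ v : V, d v) / k := div_nonneg (Finset.sum_nonneg fun v _ => hd0 v) (Nat.cast_nonneg k)
        linarith

lemma swap_sum_aux {V : Type*} [Fintype V] [DecidableEq V] (f : Finset V → ℝ) :
    ∑ v : V, ∑ s ∈ Finset.univ.filter (fun s : Finset V => v ∈ s), f s
      = ∑ s : Finset V, (s.card : ℝ) * f s := by
  have h1 : ∀ v : V, ∑ s ∈ Finset.univ.filter (fun s : Finset V => v ∈ s), f s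
      = ∑ s : Finset V, if v ∈ s then f s else 0 := fun v => Finset.sum_filter _ _
  simp_rw [h1]
  rw [Finset.sum_comm]
  refine Finset.sum_congr rfl fun s _ => ?_
  rw [Finset.sum_ite_mem, Finset.univ_inter, Finset.sum_const, nsmul_eq_mul]

/-- If `k ≥ 1` and `R` is a positive integer such that every graph on `R`
vertices contains a clique of size `k` or an independent set of size `k`, then every finite
graph `G` with `ω(G) < k` satisfies `χ_f(G) ≤ Z_f(G) + R`. -/
theorem chif_le_Zf_add_ramsey (k R : ℕ) (hk : 1 ≤ k) (hR : 0 < R)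
    (hRam : ∀ H : SimpleGraph (Fin R),
      (∃ s : Finset (Fin R), IsCliqueF H s ∧ s.card = k) ∨
      (∃ s : Finset (Fin R), IsIndepF H s ∧ s.card = k))
    {V : Type*} [Fintype V] [DecidableEq V] (G : SimpleGraph V)
    (hω : ∀ s : Finset V, IsCliqueF G s → s.card < k) :
    chif G ≤ Zf G + (R : ℝ) := by
  classical
  have hext := ramsey_indep_aux k R hRam G hω
  have hR1 : (1:ℝ) ≤ (R:ℝ) := by exact_mod_cast hR
  have hk0 : (0:ℝ) < (k:ℝ) := by exact_mod_cast hk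
  have key : ∀ x ∈ {x | ∃ w, IsFracCocoloring G w ∧ x = ∑ s : Finset V, w s},
      chif G ≤ x + R := by
    rintro x ⟨w, ⟨hw0, hwsupp, hwcov⟩, rfl⟩
    set wI : Finset V → ℝ := fun s => if IsIndepF G s then w s else 0 with hwI
    have hwI0 : ∀ s, 0 ≤ wI s := fun s => by
      simp only [hwI]; split; exacts [hw0 s, le_refl 0]
    have hwIle : ∀ s, wI s ≤ w s := fun s => by
      simp only [hwI]; split; exacts [le_refl _, hw0 s]
    set a : V → ℝ := fun v => ∑ s ∈ Finset.univ.filter (fun s : Finset V => v ∈ s), wI s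
      with ha
    have ha0 : ∀ v, 0 ≤ a v := fun v => Finset.sum_nonneg fun s _ => hwI0 s
    set d : V → ℝ := fun v => max 0 (1 - a v) with hd
    have hd0 : ∀ v, 0 ≤ d v := fun v => le_max_left _ _
    have hd1 : ∀ v, d v ≤ 1 := fun v => max_le (by norm_num) (by linarith [ha0 v])
    obtain ⟨wc, hwc0, hwcsupp, hwccov, hwctot⟩ :=
      cover_aux k R hk hR G hext _ d (le_refl _) hd0 hd1
    -- bound sum of deficiencies by k times the clique weight
    have hdc : ∀ v, d v ≤ ∑ s ∈ Finset.univ.filter (fun s : Finset V => v ∈ s),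
        (w s - wI s) := by
      intro v
      have h2 : (0:ℝ) ≤ ∑ s ∈ Finset.univ.filter (fun s : Finset V => v ∈ s),
          (w s - wI s) := Finset.sum_nonneg fun s _ => by linarith [hwIle s]
      have h1 : a v + ∑ s ∈ Finset.univ.filter (fun s : Finset V => v ∈ s), (w s - wI s)
          = ∑ s ∈ Finset.univ.filter (fun s : Finset V => v ∈ s), w s := by
        rw [ha]; rw [← Finset.sum_add_distrib]
        exact Finset.sum_congr rfl fun s _ => by ring
      have h3 := hwcov v
      exact max_le h2 (by linarith)
    have hcardle : ∀ s : Finset V, (s.card : ℝ) * (w s - wI s) ≤ (k:ℝ) * (w s - wI s) := by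
      intro s
      by_cases hz : w s - wI s = 0
      · rw [hz]; simp
      · have hwsne : w s ≠ 0 := by
          intro h0
          apply hz
          have : wI s = 0 := by simp only [hwI]; split <;> simp [h0]
          rw [h0, this, sub_zero]
        have hnotI : ¬ IsIndepF G s := by
          intro hI
          apply hz
          simp only [hwI, if_pos hI, sub_self]
        have hcl : IsCliqueF G s := (hwsupp s hwsne).resolve_right hnotI
        have hlt := hω s hcl
        have hcast : (s.card : ℝ) ≤ (k:ℝ) := by exact_mod_cast le_of_lt hlt
        have : 0 ≤ w s - wI s := by linarith [hwIle s]
        exact mul_le_mul_of_nonneg_right hcast this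
    have hsumd : ∑ v : V, d v ≤ (k:ℝ) * ∑ s : Finset V, (w s - wI s) := by
      calc ∑ v : V, d v
          ≤ ∑ v : V, ∑ s ∈ Finset.univ.filter (fun s : Finset V => v ∈ s), (w s - wI s) :=
            Finset.sum_le_sum fun v _ => hdc v
        _ = ∑ s : Finset V, (s.card : ℝ) * (w s - wI s) := swap_sum_aux _
        _ ≤ ∑ s : Finset V, (k:ℝ) * (w s - wI s) := Finset.sum_le_sum fun s _ => hcardle s
        _ = (k:ℝ) * ∑ s : Finset V, (w s - wI s) := (Finset.mul_sum _ _ _).symm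
    have hdk : (∑ v : V, d v) / k ≤ ∑ s : Finset V, (w s - wI s) := by
      rw [div_le_iff₀ hk0]
      calc ∑ v : V, d v ≤ (k:ℝ) * ∑ s : Finset V, (w s - wI s) := hsumd
        _ = (∑ s : Finset V, (w s - wI s)) * k := by ring
    -- the final coloring
    set w' : Finset V → ℝ := fun s => wI s + wc s with hw'
    have hcol : IsFracColoring G w' := by
      refine ⟨fun s => ?_, fun s hs => ?_, fun v => ?_⟩
      · have := hwI0 s; have := hwc0 s; simp only [hw']; linarith
      · by_cases hI : IsIndepF G s
        · exact hI
        · apply hwcsupp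
          intro hc
          apply hs
          simp only [hw', hc, add_zero, hwI, if_neg hI]
      · have hcov := hwccov v
        have hmax : 1 - a v ≤ d v := le_max_right _ _
        have hsplit : ∑ s ∈ Finset.univ.filter (fun s : Finset V => v ∈ s), w' s
            = a v + ∑ s ∈ Finset.univ.filter (fun s : Finset V => v ∈ s), wc s := by
          rw [ha, ← Finset.sum_add_distrib]
        rw [hsplit]
        linarith
    have htot : ∑ s : Finset V, w' s ≤ (∑ s : Finset V, w s) + R := by
      have e1 : ∑ s : Finset V, w' s = ∑ s : Finset V, wI s + ∑ s : Finset V, wc s :=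
        Finset.sum_add_distrib
      have e2 : ∑ s : Finset V, (w s - wI s)
          = ∑ s : Finset V, w s - ∑ s : Finset V, wI s := Finset.sum_sub_distrib _ _
      rw [e1]
      linarith [hwctot, hdk, e2 ▸ hdk]
    have hbdd : BddBelow {x | ∃ w, IsFracColoring G w ∧ x = ∑ s : Finset V, w s} := by
      refine ⟨0, ?_⟩
      rintro y ⟨w2, hw2, rfl⟩
      exact Finset.sum_nonneg fun s _ => hw2.1 s
    have hmem : (∑ s : Finset V, w' s) ∈
        {x | ∃ w, IsFracColoring G w ∧ x = ∑ s : Finset V, w s} := ⟨w', hcol, rfl⟩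
    calc chif G ≤ ∑ s : Finset V, w' s := csInf_le hbdd hmem
      _ ≤ _ := htot
  have hne : {x | ∃ w, IsFracCocoloring G w ∧ x = ∑ s : Finset V, w s}.Nonempty := by
    refine ⟨_, ⟨fun s => if s.card = 1 then (1:ℝ) else 0, ⟨?_, ?_, ?_⟩, rfl⟩⟩
    · intro s; show (0:ℝ) ≤ if s.card = 1 then 1 else 0; split <;> norm_num
    · intro s hs
      have hc : s.card = 1 := by
        by_contra hc
        exact hs (if_neg hc)
      obtain ⟨u, rfl⟩ := Finset.card_eq_one.mp hc
      left
      intro a ha b hb hab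
      simp only [Finset.mem_singleton] at ha hb
      exact absurd (ha.trans hb.symm) hab
    · intro v
      have hmem : ({v} : Finset V) ∈ Finset.univ.filter (fun s : Finset V => v ∈ s) := by
        simp
      have hval : (if ({v} : Finset V).card = 1 then (1:ℝ) else 0) = 1 := by
        rw [if_pos (Finset.card_singleton v)]
      calc (1:ℝ) = _ := hval.symm
        _ ≤ _ := Finset.single_le_sum (f := fun s : Finset V => if s.card = 1 then (1:ℝ) else 0)
            (fun s _ => by show (0:ℝ) ≤ if s.card = 1 then 1 else 0; split <;> norm_num) hmem
  have h2 : chif G - R ≤ Zf G := le_csInf hne fun x hx => by linarith [key x hx]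
  linarith
end
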